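/- arXiv:2603.19102 — 7 statements merged into one kernel-verified Lean document; each statement's English description precedes it below -/
import Mathlib

section
/- Let X be a real Banach space, let N : X × X → X be a bilinear map and T : X → X a linear map, and suppose there are constants C₁ ∈ [0,1) and C₂ > 0 such that ‖N(u,v)‖ ≤ C₂·‖u‖·‖v‖ and ‖T u‖ ≤ C₁·‖u‖ for all u, v ∈ X. Let ε ≥ 0 satisfy ε < (1−C₁)²/(4·C₂) and let u₁ ∈ X with ‖u₁‖ ≤ ε. Then the sequence (uₙ) defined by u₀' := u₁ and u_{n+1} := u₁ + N(uₙ,uₙ) + T uₙ satisfies ‖uₙ‖ ≤ 2ε/(1−C₁) for every n, converges in X, and its limit u is the unique element of X with ‖u‖ ≤ 2ε/(1−C₁) satisfying the equation u = u₁ + N(u,u) + T u. -/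
/-- Abstract fixed-point lemma (Lemma 6.1): Picard iteration for
`u = u₁ + N(u,u) + T u` in a Banach space. -/
theorem abstract_fixed_point
    {X : Type*} [NormedAddCommGroup X] [NormedSpace ℝ X] [CompleteSpace X]
    (N : X →ₗ[ℝ] X →ₗ[ℝ] X) (T : X →ₗ[ℝ] X) (C₁ C₂ ε : ℝ)
    (hC₁0 : 0 ≤ C₁) (hC₁1 : C₁ < 1) (hC₂ : 0 < C₂)
    (hN : ∀ u v : X, ‖N u v‖ ≤ C₂ * ‖u‖ * ‖v‖)
    (hT : ∀ u : X, ‖T u‖ ≤ C₁ * ‖u‖)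
    (hε0 : 0 ≤ ε) (hε : ε < (1 - C₁) ^ 2 / (4 * C₂))
    (u₁ : X) (hu₁ : ‖u₁‖ ≤ ε)
    (u : ℕ → X) (hu0 : u 0 = u₁)
    (hrec : ∀ n : ℕ, u (n + 1) = u₁ + N (u n) (u n) + T (u n)) :
    (∀ n : ℕ, ‖u n‖ ≤ 2 * ε / (1 - C₁)) ∧
      ∃ L : X, Filter.Tendsto u Filter.atTop (nhds L) ∧
        L = u₁ + N L L + T L ∧ ‖L‖ ≤ 2 * ε / (1 - C₁) ∧
        ∀ v : X, ‖v‖ ≤ 2 * ε / (1 - C₁) → v = u₁ + N v v + T v → v = L := by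
  have hd : 0 < 1 - C₁ := by linarith
  set M : ℝ := 2 * ε / (1 - C₁) with hM
  have hMd : M * (1 - C₁) = 2 * ε := by
    rw [hM]; field_simp
  have hM0 : 0 ≤ M := by
    rw [hM]; positivity
  have hεC : 4 * C₂ * ε < (1 - C₁) ^ 2 := by
    rw [lt_div_iff₀ (by positivity)] at hε
    nlinarith
  have hεM : ε ≤ M := by nlinarith
  set k : ℝ := 2 * C₂ * M + C₁ with hk
  have hk0 : 0 ≤ k := by
    have : 0 ≤ 2 * C₂ * M := by positivity
    linarith
  have hk1 : k < 1 := by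
    rw [hk]
    nlinarith [hεC, hMd, hd]
  -- invariance of the ball
  have hCM : C₂ * M ^ 2 ≤ ε := by
    nlinarith [mul_le_mul_of_nonneg_right hεC.le hε0, mul_pos hd hd, hMd,
      sq_nonneg (M * (1 - C₁) - 2 * ε)]
  have hinv : ∀ w : X, ‖w‖ ≤ M → ‖u₁ + N w w + T w‖ ≤ M := by
    intro w hw
    have h1 : ‖u₁ + N w w + T w‖ ≤ ‖u₁‖ + ‖N w w‖ + ‖T w‖ := norm_add₃_le
    have h2 : ‖N w w‖ ≤ C₂ * ‖w‖ * ‖w‖ := hN w w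
    have h3 : ‖T w‖ ≤ C₁ * ‖w‖ := hT w
    have hw0 : 0 ≤ ‖w‖ := norm_nonneg w
    nlinarith [mul_le_mul hw hw hw0 hM0]
  have hbd : ∀ n, ‖u n‖ ≤ M := by
    intro n
    induction n with
    | zero => rw [hu0]; exact hu₁.trans hεM
    | succ n ih => rw [hrec n]; exact hinv _ ih
  -- contraction estimate
  have hcontr : ∀ v w : X, ‖v‖ ≤ M → ‖w‖ ≤ M →
      ‖(u₁ + N v v + T v) - (u₁ + N w w + T w)‖ ≤ k * ‖v - w‖ := by
    intro v w hv hw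
    have hdiff : (u₁ + N v v + T v) - (u₁ + N w w + T w)
        = N v (v - w) + N (v - w) w + T (v - w) := by
      simp only [map_sub, LinearMap.sub_apply]
      abel
    rw [hdiff]
    have h1 : ‖N v (v - w) + N (v - w) w + T (v - w)‖
        ≤ ‖N v (v - w)‖ + ‖N (v - w) w‖ + ‖T (v - w)‖ := norm_add₃_le
    have h2 := hN v (v - w)
    have h3 := hN (v - w) w
    have h4 := hT (v - w)
    have h5 : 0 ≤ ‖v - w‖ := norm_nonneg _
    have h6 : C₂ * ‖v‖ * ‖v - w‖ ≤ C₂ * M * ‖v - w‖ := by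
      apply mul_le_mul_of_nonneg_right _ h5
      exact mul_le_mul_of_nonneg_left hv hC₂.le
    have h7 : C₂ * ‖v - w‖ * ‖w‖ ≤ C₂ * M * ‖v - w‖ := by
      have : C₂ * ‖v - w‖ * ‖w‖ = C₂ * ‖w‖ * ‖v - w‖ := by ring
      rw [this]
      apply mul_le_mul_of_nonneg_right _ h5
      exact mul_le_mul_of_nonneg_left hw hC₂.le
    rw [hk]
    nlinarith
  -- geometric decay of increments
  have hstep : ∀ n : ℕ, ‖u (n + 2) - u (n + 1)‖ ≤ k * ‖u (n + 1) - u n‖ := by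
    intro n
    have h := hcontr (u (n + 1)) (u n) (hbd (n + 1)) (hbd n)
    rw [← hrec (n + 1), ← hrec n] at h
    exact h
  have hgeo : ∀ n : ℕ, ‖u (n + 1) - u n‖ ≤ ‖u 1 - u 0‖ * k ^ n := by
    intro n
    induction n with
    | zero => simp
    | succ n ih =>
      calc ‖u (n + 2) - u (n + 1)‖ ≤ k * ‖u (n + 1) - u n‖ := hstep n
        _ ≤ k * (‖u 1 - u 0‖ * k ^ n) := mul_le_mul_of_nonneg_left ih hk0
        _ = ‖u 1 - u 0‖ * k ^ (n + 1) := by ring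
  have hcauchy : CauchySeq u := by
    apply cauchySeq_of_le_geometric k (‖u 1 - u 0‖) hk1
    intro n
    rw [dist_eq_norm']
    exact hgeo n
  obtain ⟨L, hL⟩ := cauchySeq_tendsto_of_complete hcauchy
  refine ⟨hbd, L, hL, ?_, ?_, ?_⟩
  · -- L is a fixed point
    have hLM : ‖L‖ ≤ M := le_of_tendsto hL.norm (Filter.Eventually.of_forall hbd)
    have h1 : Filter.Tendsto (fun n => u (n + 1)) Filter.atTop (nhds L) :=
      hL.comp (Filter.tendsto_add_atTop_nat 1)
    have hnorm0 : Filter.Tendsto (fun n => ‖u n - L‖) Filter.atTop (nhds 0) :=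
      tendsto_iff_norm_sub_tendsto_zero.mp hL
    have h2 : Filter.Tendsto (fun n => u (n + 1)) Filter.atTop
        (nhds (u₁ + N L L + T L)) := by
      rw [tendsto_iff_norm_sub_tendsto_zero]
      have hub : ∀ n : ℕ, ‖u (n + 1) - (u₁ + N L L + T L)‖ ≤ k * ‖u n - L‖ := by
        intro n
        rw [hrec n]
        exact hcontr _ _ (hbd n) hLM
      have hklim : Filter.Tendsto (fun n => k * ‖u n - L‖) Filter.atTop (nhds 0) := by
        have := hnorm0.const_mul k
        simpa using this
      exact squeeze_zero (fun n => norm_nonneg _) hub hklim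
    exact tendsto_nhds_unique h1 h2
  · exact le_of_tendsto hL.norm (Filter.Eventually.of_forall hbd)
  · -- uniqueness
    intro v hvM hvfix
    have hLM : ‖L‖ ≤ M := le_of_tendsto hL.norm (Filter.Eventually.of_forall hbd)
    have hLfix : L = u₁ + N L L + T L := by
      -- reuse the same argument: L is limit of u (n+1) = F (u n)
      have h1 : Filter.Tendsto (fun n => u (n + 1)) Filter.atTop (nhds L) :=
        hL.comp (Filter.tendsto_add_atTop_nat 1)
      have hnorm0 : Filter.Tendsto (fun n => ‖u n - L‖) Filter.atTop (nhds 0) :=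
        tendsto_iff_norm_sub_tendsto_zero.mp hL
      have h2 : Filter.Tendsto (fun n => u (n + 1)) Filter.atTop
          (nhds (u₁ + N L L + T L)) := by
        rw [tendsto_iff_norm_sub_tendsto_zero]
        have hub : ∀ n : ℕ, ‖u (n + 1) - (u₁ + N L L + T L)‖ ≤ k * ‖u n - L‖ := by
          intro n
          rw [hrec n]
          exact hcontr _ _ (hbd n) hLM
        have hklim : Filter.Tendsto (fun n => k * ‖u n - L‖) Filter.atTop (nhds 0) := by
          have := hnorm0.const_mul k
          simpa using this
        exact squeeze_zero (fun n => norm_nonneg _) hub hklim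
      exact tendsto_nhds_unique h1 h2
    have hdist : ‖v - L‖ ≤ k * ‖v - L‖ := by
      calc ‖v - L‖ = ‖(u₁ + N v v + T v) - (u₁ + N L L + T L)‖ := by
            rw [← hvfix, ← hLfix]
        _ ≤ k * ‖v - L‖ := hcontr _ _ hvM hLM
    have h0 : ‖v - L‖ ≤ 0 := by nlinarith [norm_nonneg (v - L)]
    have := norm_le_zero_iff.mp h0
    exact sub_eq_zero.mp this
end

section
/- Let (X,d) be a metric space endowed with a Borel measure μ, and let m > 0, λ ∈ [0,m), p ∈ [1,∞), λ₁ ≥ 0, a ≥ 0, c ∈ (0,1/4) and C₀ > 0. Let G : (0,∞) × X × X → ℝ be measurable with 0 ≤ G(t,x,y) ≤ C₀ · max{1, t^{−m/2}} · exp(−λ₁·t − d(x,y)²/(4t)) for all t > 0 and x, y ∈ X, and with ∫_X G(t,x,y) dμ(y) ≤ 1 for all t > 0 and x ∈ X. Let u₀ : X → ℝ be measurable and N ≥ 0 be such that ∫_{B(x,R)} |u₀|^p dμ ≤ N^p · R^λ · e^{aR} for every x ∈ X and R > 0. Then there exists a constant C > 0, depending only on C₀, m, λ, p, a and c, such that for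 all t > 0 and all x ∈ X: ∫_X G(t,x,y)·|u₀(y)| dμ(y) ≤ C · (min{1,t})^{−m/(2p)} · t^{λ/(2p)} · exp(−(λ₁ − a·γ)·t/p) · N, where γ = a·(1/4 − c)^{−1}. -/
open MeasureTheory

set_option maxHeartbeats 1000000
open MeasureTheory

lemma summable_aux (lam c : ℝ) (hlam0 : 0 ≤ lam) (hc0 : 0 < c) :
    Summable (fun j : ℕ => ((j : ℝ) + 1) ^ lam * Real.exp (-(c * (j:ℝ) ^ 2))) := by
  have hr : ‖Real.exp (-c)‖ < 1 := by
    rw [Real.norm_eq_abs, abs_of_pos (Real.exp_pos _)]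
    exact Real.exp_lt_one_iff.mpr (by linarith)
  have h1 : Summable (fun n : ℕ => (n : ℝ) ^ ⌈lam⌉₊ * Real.exp (-c) ^ n) :=
    summable_pow_mul_geometric_of_norm_lt_one ⌈lam⌉₊ hr
  have h2 : Summable (fun j : ℕ => ((j + 1 : ℕ) : ℝ) ^ ⌈lam⌉₊ * Real.exp (-c) ^ (j + 1)) :=
    (summable_nat_add_iff 1).mpr h1
  have h3 : Summable (fun j : ℕ => ((j : ℝ) + 1) ^ ⌈lam⌉₊ * Real.exp (-c) ^ j) := by
    have h4 := h2.mul_left (Real.exp (-c))⁻¹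
    refine h4.congr fun j => ?_
    have hx : Real.exp (-c) ≠ 0 := (Real.exp_pos _).ne'
    push_cast
    rw [pow_succ]
    field_simp
  refine Summable.of_nonneg_of_le (fun j => ?_) (fun j => ?_) h3
  · show (0:ℝ) ≤ ((j : ℝ) + 1) ^ lam * Real.exp (-(c * (j:ℝ) ^ 2))
    positivity
  · show ((j : ℝ) + 1) ^ lam * Real.exp (-(c * (j:ℝ) ^ 2)) ≤ ((j : ℝ) + 1) ^ ⌈lam⌉₊ * Real.exp (-c) ^ j
    have h0 : (0:ℝ) ≤ (j:ℝ) := by positivity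
    have hb : (1:ℝ) ≤ (j:ℝ) + 1 := by linarith
    have e1 : ((j : ℝ) + 1) ^ lam ≤ ((j : ℝ) + 1) ^ (⌈lam⌉₊ : ℝ) :=
      Real.rpow_le_rpow_of_exponent_le hb (Nat.le_ceil lam)
    have e2 : Real.exp (-(c * (j:ℝ) ^ 2)) ≤ Real.exp (-c) ^ j := by
      rw [← Real.exp_nat_mul]
      apply Real.exp_le_exp.mpr
      have hj : j ≤ j^2 := Nat.le_self_pow two_ne_zero j
      have : (j:ℝ) ≤ (j:ℝ)^2 := by exact_mod_cast hj
      nlinarith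
    calc ((j : ℝ) + 1) ^ lam * Real.exp (-(c * (j:ℝ) ^ 2))
        ≤ ((j : ℝ) + 1) ^ ((⌈lam⌉₊:ℕ):ℝ) * (Real.exp (-c) ^ j) := by
          apply mul_le_mul e1 e2 (Real.exp_pos _).le ?_
          have : (0:ℝ) < ((j : ℝ) + 1) ^ ((⌈lam⌉₊:ℕ):ℝ) := Real.rpow_pos_of_pos (by positivity) _
          linarith
      _ = ((j : ℝ) + 1) ^ (⌈lam⌉₊:ℕ) * Real.exp (-c) ^ j := by
          rw [Real.rpow_natCast]

lemma holder_step {X : Type*} [MeasurableSpace X] (μ : Measure X) (p : ℝ) (hp : 1 ≤ p)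
    (g u : X → ℝ) (hg : Measurable g) (hu : Measurable u)
    (hmark : ∫⁻ y, ENNReal.ofReal (g y) ∂μ ≤ 1) :
    ∫⁻ y, ENNReal.ofReal (g y * |u y|) ∂μ ≤
      (∫⁻ y, ENNReal.ofReal (g y * |u y| ^ p) ∂μ) ^ (1/p) := by
  rcases eq_or_lt_of_le hp with hp1 | hp1
  · subst hp1
    simp [Real.rpow_one]
  · set q := p.conjExponent with hq
    have hpq : p.HolderConjugate q := Real.HolderConjugate.conjExponent hp1
    have hp0 : (0:ℝ) < p := by linarith
    have hq0 : (0:ℝ) < q := hpq.symm.pos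
    set F : X → ENNReal := fun y => (ENNReal.ofReal (g y)) ^ (1/p) * ENNReal.ofReal |u y|
      with hF
    set H : X → ENNReal := fun y => (ENNReal.ofReal (g y)) ^ (1/q) with hH
    have hFm : AEMeasurable F μ :=
      ((hg.ennreal_ofReal.pow_const _).mul (hu.abs.ennreal_ofReal)).aemeasurable
    have hHm : AEMeasurable H μ := (hg.ennreal_ofReal.pow_const _).aemeasurable
    have key : ∀ y, ENNReal.ofReal (g y * |u y|) ≤ (F * H) y := by
      intro y
      have h1 : F y * H y = (ENNReal.ofReal (g y)) ^ (1/p + 1/q) * ENNReal.ofReal |u y| := by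
        rw [ENNReal.rpow_add_of_nonneg _ _ (one_div_nonneg.mpr hp0.le)
          (one_div_nonneg.mpr hq0.le)]
        ring
      show ENNReal.ofReal (g y * |u y|) ≤ F y * H y
      rw [h1, one_div, one_div, hpq.inv_add_inv_eq_one, ENNReal.rpow_one]
      rcases le_or_gt (g y) 0 with h | h
      · have : g y * |u y| ≤ 0 := mul_nonpos_of_nonpos_of_nonneg h (abs_nonneg _)
        simp [ENNReal.ofReal_eq_zero.mpr this]
      · rw [← ENNReal.ofReal_mul h.le]
    have hFP : ∀ y, F y ^ p = ENNReal.ofReal (g y * |u y| ^ p) := by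
      intro y
      rw [hF]
      show ((ENNReal.ofReal (g y)) ^ (1/p) * ENNReal.ofReal |u y|) ^ p = _
      rw [ENNReal.mul_rpow_of_nonneg _ _ hp0.le, ← ENNReal.rpow_mul,
        one_div, inv_mul_cancel₀ hp0.ne', ENNReal.rpow_one,
        ENNReal.ofReal_rpow_of_nonneg (abs_nonneg _) hp0.le]
      rcases le_or_gt (g y) 0 with h | h
      · have h2 : g y * |u y| ^ p ≤ 0 :=
          mul_nonpos_of_nonpos_of_nonneg h (Real.rpow_nonneg (abs_nonneg _) _)
        simp [ENNReal.ofReal_eq_zero.mpr h2, ENNReal.ofReal_eq_zero.mpr h]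
      · rw [← ENNReal.ofReal_mul h.le]
    have hHq : ∀ y, H y ^ q = ENNReal.ofReal (g y) := by
      intro y
      rw [hH]
      show ((ENNReal.ofReal (g y)) ^ (1/q)) ^ q = _
      rw [← ENNReal.rpow_mul, one_div, inv_mul_cancel₀ hq0.ne', ENNReal.rpow_one]
    calc ∫⁻ y, ENNReal.ofReal (g y * |u y|) ∂μ
        ≤ ∫⁻ y, (F * H) y ∂μ := lintegral_mono key
      _ ≤ (∫⁻ y, F y ^ p ∂μ) ^ (1/p) * (∫⁻ y, H y ^ q ∂μ) ^ (1/q) :=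
          ENNReal.lintegral_mul_le_Lp_mul_Lq μ hpq hFm hHm
      _ ≤ (∫⁻ y, ENNReal.ofReal (g y * |u y| ^ p) ∂μ) ^ (1/p) * 1 := by
          have e1 : (∫⁻ y, F y ^ p ∂μ) = ∫⁻ y, ENNReal.ofReal (g y * |u y| ^ p) ∂μ := by
            simp_rw [hFP]
          have e2 : (∫⁻ y, H y ^ q ∂μ) ^ (1/q) ≤ 1 := by
            have : (∫⁻ y, H y ^ q ∂μ) ≤ 1 := by
              simp_rw [hHq]; exact hmark
            calc (∫⁻ y, H y ^ q ∂μ) ^ (1/q) ≤ (1:ENNReal) ^ (1/q) :=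
                  ENNReal.rpow_le_rpow this (one_div_nonneg.mpr hq0.le)
              _ = 1 := ENNReal.one_rpow _
          rw [e1]
          exact mul_le_mul_right e2 _
      _ = (∫⁻ y, ENNReal.ofReal (g y * |u y| ^ p) ∂μ) ^ (1/p) := mul_one _

lemma exp_aux (a c s : ℝ) (ha : 0 ≤ a) (hc0 : 0 < c) (hc4 : c < 1/4) (hs : 0 ≤ s) (x : ℝ)
    (hx : 0 ≤ x) :
    -(x^2)/4 + a*((x+1)*s) ≤ -(c*x^2) + a*(a*(1/4-c)⁻¹)*s^2 + (1/4-c)/3 := by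
  have hεpos : (0:ℝ) < 1/4 - c := by linarith
  have hne : (1/4-c) ≠ 0 := hεpos.ne'
  have key : (1/4-c)*((1/4-c)*x^2 + a^2*(1/4-c)⁻¹*s^2 + (1/4-c)/3 - a*x*s - a*s)
      = ((1/4-c)*x - a*s/2)^2 + (3*a*s - 2*(1/4-c))^2/12 := by
    have hmul : (1/4-c)*(1/4-c)⁻¹ = 1 := mul_inv_cancel₀ hne
    linear_combination (a^2*s^2) * hmul
  have h2 : 0 ≤ (1/4-c)*x^2 + a^2*(1/4-c)⁻¹*s^2 + (1/4-c)/3 - a*x*s - a*s := by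
    nlinarith [sq_nonneg ((1/4-c)*x - a*s/2), sq_nonneg (3*a*s - 2*(1/4-c)), key, hεpos]
  nlinarith [h2]

lemma max_rpow_aux (m p t : ℝ) (hm : 0 < m) (hp0 : 0 < p) (ht : 0 < t) :
    (max 1 (t ^ (-(m/2)))) ^ (1/p) = (min 1 t) ^ (-(m/(2*p))) := by
  rcases le_total t 1 with h | h
  · have hmin : min 1 t = t := min_eq_right h
    have hmax : max 1 (t ^ (-(m/2))) = t ^ (-(m/2)) :=
      max_eq_right (Real.one_le_rpow_of_pos_of_le_one_of_nonpos ht h (by nlinarith))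
    rw [hmin, hmax, ← Real.rpow_mul ht.le]
    congr 1
    ring
  · have hmin : min 1 t = 1 := min_eq_left h
    have hmax : max 1 (t ^ (-(m/2))) = 1 :=
      max_eq_left (Real.rpow_le_one_of_one_le_of_nonpos h (by nlinarith))
    rw [hmin, hmax, Real.one_rpow, Real.one_rpow]

/-- Abstract form of the dispersive estimate `e^{tΔ_g} : M^g_{p,λ} → L^∞`
(Theorem 3.1(i)): a Markovian kernel with the Gaussian upper bound
`C₀ max{1,t^{-m/2}} e^{-λ₁ t - d(x,y)²/(4t)}`, applied to data with the
exponentially-weighted Morrey bound `∫_{B(x,R)} |u₀|^p ≤ N^p R^λ e^{aR}`. -/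
theorem dispersive_Morrey_to_Linfty_exp
    {X : Type*} [MetricSpace X] [MeasurableSpace X] [BorelSpace X]
    (μ : Measure X) (m lam p lam₁ a c C₀ N : ℝ)
    (hm : 0 < m) (hlam0 : 0 ≤ lam) (hlamm : lam < m) (hp : 1 ≤ p)
    (hlam₁ : 0 ≤ lam₁) (ha : 0 ≤ a) (hc0 : 0 < c) (hc4 : c < 1 / 4) (hC₀ : 0 < C₀)
    (G : ℝ → X → X → ℝ)
    (hGmeas : Measurable fun q : ℝ × X × X => G q.1 q.2.1 q.2.2)
    (hG0 : ∀ t > (0 : ℝ), ∀ x y : X, 0 ≤ G t x y)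
    (hGbd : ∀ t > (0 : ℝ), ∀ x y : X, G t x y ≤
      C₀ * max 1 (t ^ (-(m / 2))) * Real.exp (-(lam₁ * t) - dist x y ^ 2 / (4 * t)))
    (hGmarkov : ∀ t > (0 : ℝ), ∀ x : X, ∫⁻ y, ENNReal.ofReal (G t x y) ∂μ ≤ 1)
    (u₀ : X → ℝ) (hu₀ : Measurable u₀) (hN : 0 ≤ N)
    (hmor : ∀ (x : X) (R : ℝ), 0 < R →
      ∫⁻ y in Metric.ball x R, ENNReal.ofReal (|u₀ y| ^ p) ∂μ ≤
        ENNReal.ofReal (N ^ p * R ^ lam * Real.exp (a * R))) :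
    ∃ C > (0 : ℝ), ∀ t > (0 : ℝ), ∀ x : X,
      ∫⁻ y, ENNReal.ofReal (G t x y * |u₀ y|) ∂μ ≤
        ENNReal.ofReal (C * (min 1 t) ^ (-(m / (2 * p))) * t ^ (lam / (2 * p)) *
          Real.exp (-((lam₁ - a * (a * (1 / 4 - c)⁻¹)) * t / p)) * N) := by
  have hp0 : (0:ℝ) < p := lt_of_lt_of_le one_pos hp
  set γ := a * (1 / 4 - c)⁻¹ with hγ
  set S := ∑' j : ℕ, ((j : ℝ) + 1) ^ lam * Real.exp (-(c * (j:ℝ) ^ 2)) with hS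
  have hSsum := summable_aux lam c hlam0 hc0
  have hS1 : (1:ℝ) ≤ S := by
    have h0 : ((0:ℕ):ℝ) + 1 = 1 := by norm_num
    have := Summable.le_tsum hSsum 0 (fun j _ => by positivity)
    simpa [h0, Real.one_rpow] using this
  have hS0 : (0:ℝ) < S := by linarith
  set C := (C₀ * S * Real.exp ((1/4 - c)/3)) ^ (1/p) with hC
  have hCBpos : (0:ℝ) < C₀ * S * Real.exp ((1/4 - c)/3) :=
    mul_pos (mul_pos hC₀ hS0) (Real.exp_pos _)
  have hCpos : 0 < C := Real.rpow_pos_of_pos hCBpos _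
  refine ⟨C, hCpos, ?_⟩
  intro t ht x
  set M := max 1 (t ^ (-(m/2))) with hM
  have hM1 : (1:ℝ) ≤ M := le_max_left _ _
  have hMpos : (0:ℝ) < M := lt_of_lt_of_le one_pos hM1
  set E := Real.exp (-((lam₁ - a * γ) * t)) with hE
  have hNP : (0:ℝ) ≤ N ^ p := Real.rpow_nonneg hN _
  have hTL : (0:ℝ) < t ^ (lam/2) := Real.rpow_pos_of_pos ht _
  set D := C₀ * S * Real.exp ((1/4 - c)/3) * M * E * N ^ p * t ^ (lam/2) with hD
  have hDnn : (0:ℝ) ≤ D := by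
    refine mul_nonneg (mul_nonneg (mul_nonneg (mul_nonneg hCBpos.le hMpos.le)
      (Real.exp_pos _).le) hNP) hTL.le
  -- the kernel as a function of y is measurable
  have hgmeas : Measurable (fun y => G t x y) :=
    hGmeas.comp ((measurable_const.prodMk (measurable_const.prodMk measurable_id)))
  -- Step A : L^p bound
  have hLp : ∫⁻ y, ENNReal.ofReal (G t x y * |u₀ y| ^ p) ∂μ ≤ ENNReal.ofReal D := by
    set R := Real.sqrt t with hR
    have hRpos : 0 < R := Real.sqrt_pos.mpr ht
    have ht2 : R ^ 2 = t := Real.sq_sqrt ht.le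
    have hRlam : R ^ lam = t ^ (lam/2) := by
      rw [hR, Real.sqrt_eq_rpow, ← Real.rpow_mul ht.le]
      congr 1
      ring
    set A : ℕ → Set X := fun j => Metric.ball x (((j:ℝ)+1)*R) \ Metric.ball x ((j:ℝ)*R)
      with hA
    have hcover : (Set.univ : Set X) ⊆ ⋃ j, A j := by
      intro y _
      have hd0 : 0 ≤ dist y x := dist_nonneg
      refine Set.mem_iUnion.mpr ⟨⌊dist y x / R⌋₊, ?_, ?_⟩
      · rw [Metric.mem_ball]
        have h1 := Nat.lt_floor_add_one (dist y x / R)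
        calc dist y x = (dist y x / R) * R := by field_simp
          _ < ((⌊dist y x / R⌋₊:ℝ) + 1) * R := by
              exact mul_lt_mul_of_pos_right h1 hRpos
      · rw [Metric.mem_ball, not_lt]
        have h1 := Nat.floor_le (div_nonneg hd0 hRpos.le)
        calc (⌊dist y x / R⌋₊:ℝ) * R ≤ (dist y x / R) * R :=
              mul_le_mul_of_nonneg_right h1 hRpos.le
          _ = dist y x := by field_simp
    set K : ℕ → ℝ := fun j => C₀ * M * Real.exp (-(lam₁*t) - (j:ℝ)^2/4) with hK
    have hKnn : ∀ j, 0 ≤ K j := fun j => by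
      have := (Real.exp_pos (-(lam₁*t) - (j:ℝ)^2/4)).le
      positivity
    -- per-annulus bound
    have perj : ∀ j : ℕ, ∫⁻ y in A j, ENNReal.ofReal (G t x y * |u₀ y| ^ p) ∂μ ≤
        ENNReal.ofReal (K j * (N ^ p * (((j:ℝ)+1)*R) ^ lam *
          Real.exp (a * (((j:ℝ)+1)*R)))) := by
      intro j
      have hsub : A j ⊆ Metric.ball x (((j:ℝ)+1)*R) := Set.diff_subset
      have hb1 : ∀ y ∈ A j, ENNReal.ofReal (G t x y * |u₀ y| ^ p) ≤
          ENNReal.ofReal (K j) * ENNReal.ofReal (|u₀ y| ^ p) := by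
        intro y hy
        have hdist : (j:ℝ)*R ≤ dist y x := by
          have := hy.2
          rw [Metric.mem_ball, not_lt] at this
          exact this
        have hd2 : (j:ℝ)^2 * t ≤ dist x y ^ 2 := by
          rw [dist_comm]
          calc (j:ℝ)^2 * t = ((j:ℝ)*R)^2 := by rw [mul_pow, ht2]
            _ ≤ dist y x ^ 2 := by
                apply pow_le_pow_left₀ (by positivity) hdist
        have hexp : (j:ℝ)^2/4 ≤ dist x y ^ 2 / (4*t) := by
          rw [div_le_div_iff₀ (by norm_num) (by positivity)]
          nlinarith [hd2]
        have hGle : G t x y ≤ K j := by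
          refine (hGbd t ht x y).trans ?_
          rw [hK]
          have h3 : -(lam₁*t) - dist x y ^ 2/(4*t) ≤ -(lam₁*t) - (j:ℝ)^2/4 := by linarith
          have := Real.exp_le_exp.mpr h3
          have hCM : (0:ℝ) ≤ C₀ * M := by positivity
          calc C₀ * M * Real.exp (-(lam₁ * t) - dist x y ^ 2 / (4 * t))
              ≤ C₀ * M * Real.exp (-(lam₁*t) - (j:ℝ)^2/4) :=
                mul_le_mul_of_nonneg_left this hCM
            _ = _ := rfl
        rw [← ENNReal.ofReal_mul (hKnn j)]
        apply ENNReal.ofReal_le_ofReal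
        exact mul_le_mul_of_nonneg_right hGle (Real.rpow_nonneg (abs_nonneg _) _)
      calc ∫⁻ y in A j, ENNReal.ofReal (G t x y * |u₀ y| ^ p) ∂μ
          ≤ ∫⁻ y in A j, ENNReal.ofReal (K j) * ENNReal.ofReal (|u₀ y| ^ p) ∂μ :=
            setLIntegral_mono (measurable_const.mul
              ((hu₀.abs.pow_const p).ennreal_ofReal)) hb1
        _ = ENNReal.ofReal (K j) * ∫⁻ y in A j, ENNReal.ofReal (|u₀ y| ^ p) ∂μ :=
            lintegral_const_mul' _ _ ENNReal.ofReal_ne_top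
        _ ≤ ENNReal.ofReal (K j) *
            ∫⁻ y in Metric.ball x (((j:ℝ)+1)*R), ENNReal.ofReal (|u₀ y| ^ p) ∂μ :=
            mul_le_mul_right (lintegral_mono_set hsub) _
        _ ≤ ENNReal.ofReal (K j) * ENNReal.ofReal (N ^ p * (((j:ℝ)+1)*R) ^ lam *
            Real.exp (a * (((j:ℝ)+1)*R))) :=
            mul_le_mul_right (hmor x _ (by positivity)) _
        _ = _ := (ENNReal.ofReal_mul (hKnn j)).symm
    -- comparison of the summands with a convergent series
    have hcd : ∀ j : ℕ, K j * (N ^ p * (((j:ℝ)+1)*R) ^ lam *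
        Real.exp (a * (((j:ℝ)+1)*R))) ≤
        (C₀ * Real.exp ((1/4 - c)/3) * M * E * N ^ p * t ^ (lam/2)) *
          (((j:ℝ)+1) ^ lam * Real.exp (-(c * (j:ℝ)^2))) := by
      intro j
      have hr1 : (((j:ℝ)+1)*R) ^ lam = ((j:ℝ)+1) ^ lam * t ^ (lam/2) := by
        rw [Real.mul_rpow (by positivity) hRpos.le, hRlam]
      have hjp : (0:ℝ) < ((j:ℝ)+1) ^ lam := Real.rpow_pos_of_pos (by positivity) _
      have Pnn : (0:ℝ) ≤ C₀ * M * N ^ p * t ^ (lam/2) * ((j:ℝ)+1) ^ lam := by positivity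
      have e_ineq : -(lam₁*t) - (j:ℝ)^2/4 + a*(((j:ℝ)+1)*R) ≤
          (1/4 - c)/3 + (-((lam₁ - a * γ) * t)) + (-(c * (j:ℝ)^2)) := by
        have h4 := exp_aux a c R ha hc0 hc4 hRpos.le (j:ℝ) (by positivity)
        rw [ht2, ← hγ] at h4
        linarith [h4]
      have eq1 : K j * (N ^ p * (((j:ℝ)+1)*R) ^ lam * Real.exp (a * (((j:ℝ)+1)*R))) =
          (C₀ * M * N ^ p * t ^ (lam/2) * ((j:ℝ)+1) ^ lam) *
            Real.exp (-(lam₁*t) - (j:ℝ)^2/4 + a*(((j:ℝ)+1)*R)) := by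
        rw [hr1, hK]
        rw [show -(lam₁*t) - (j:ℝ)^2/4 + a*(((j:ℝ)+1)*R) =
          (-(lam₁*t) - (j:ℝ)^2/4) + a*(((j:ℝ)+1)*R) from by ring, Real.exp_add]
        ring
      have eq2 : (C₀ * Real.exp ((1/4 - c)/3) * M * E * N ^ p * t ^ (lam/2)) *
          (((j:ℝ)+1) ^ lam * Real.exp (-(c * (j:ℝ)^2))) =
          (C₀ * M * N ^ p * t ^ (lam/2) * ((j:ℝ)+1) ^ lam) *
            Real.exp ((1/4 - c)/3 + (-((lam₁ - a * γ) * t)) + (-(c * (j:ℝ)^2))) := by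
        rw [hE, Real.exp_add, Real.exp_add]
        ring
      rw [eq1, eq2]
      exact mul_le_mul_of_nonneg_left (Real.exp_le_exp.mpr e_ineq) Pnn
    have hsum2 : Summable (fun j : ℕ =>
        (C₀ * Real.exp ((1/4 - c)/3) * M * E * N ^ p * t ^ (lam/2)) *
          (((j:ℝ)+1) ^ lam * Real.exp (-(c * (j:ℝ)^2)))) := hSsum.mul_left _
    calc ∫⁻ y, ENNReal.ofReal (G t x y * |u₀ y| ^ p) ∂μ
        = ∫⁻ y in Set.univ, ENNReal.ofReal (G t x y * |u₀ y| ^ p) ∂μ :=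
          (setLIntegral_univ _).symm
      _ ≤ ∫⁻ y in ⋃ j, A j, ENNReal.ofReal (G t x y * |u₀ y| ^ p) ∂μ :=
          lintegral_mono_set hcover
      _ ≤ ∑' j : ℕ, ∫⁻ y in A j, ENNReal.ofReal (G t x y * |u₀ y| ^ p) ∂μ :=
          lintegral_iUnion_le _ _
      _ ≤ ∑' j : ℕ, ENNReal.ofReal (K j * (N ^ p * (((j:ℝ)+1)*R) ^ lam *
          Real.exp (a * (((j:ℝ)+1)*R)))) := ENNReal.tsum_le_tsum perj
      _ ≤ ∑' j : ℕ, ENNReal.ofReal ((C₀ * Real.exp ((1/4 - c)/3) * M * E * N ^ p * t ^ (lam/2)) *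
          (((j:ℝ)+1) ^ lam * Real.exp (-(c * (j:ℝ)^2)))) :=
          ENNReal.tsum_le_tsum (fun j => ENNReal.ofReal_le_ofReal (hcd j))
      _ = ENNReal.ofReal (∑' j : ℕ,
          (C₀ * Real.exp ((1/4 - c)/3) * M * E * N ^ p * t ^ (lam/2)) *
          (((j:ℝ)+1) ^ lam * Real.exp (-(c * (j:ℝ)^2)))) := by
          rw [ENNReal.ofReal_tsum_of_nonneg ?_ hsum2]
          intro j
          have hjp : (0:ℝ) < ((j:ℝ)+1) ^ lam := Real.rpow_pos_of_pos (by positivity) _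
          have hEp := (Real.exp_pos (-((lam₁ - a * γ) * t))).le
          have h5 : (0:ℝ) ≤ C₀ * Real.exp ((1/4 - c)/3) * M * E * N ^ p * t ^ (lam/2) := by
            rw [hE]; positivity
          positivity
      _ = ENNReal.ofReal D := by
          rw [tsum_mul_left, ← hS, hD]
          congr 1
          ring
  -- Step B : Hölder / Jensen and conclusion
  have hH := holder_step μ p hp (fun y => G t x y) u₀ hgmeas hu₀ (hGmarkov t ht x)
  refine hH.trans ?_
  have h1p : (0:ℝ) ≤ 1/p := by positivity
  calc (∫⁻ y, ENNReal.ofReal (G t x y * |u₀ y| ^ p) ∂μ) ^ (1/p)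
      ≤ (ENNReal.ofReal D) ^ (1/p) := ENNReal.rpow_le_rpow hLp h1p
    _ = ENNReal.ofReal (D ^ (1/p)) := ENNReal.ofReal_rpow_of_nonneg hDnn h1p
    _ = ENNReal.ofReal (C * (min 1 t) ^ (-(m / (2 * p))) * t ^ (lam / (2 * p)) *
        Real.exp (-((lam₁ - a * γ) * t / p)) * N) := by
        congr 1
        rw [hD]
        rw [Real.mul_rpow (by positivity) hTL.le,
          Real.mul_rpow (by positivity) hNP,
          Real.mul_rpow (by positivity) (Real.exp_pos _).le,
          Real.mul_rpow hCBpos.le hMpos.le]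
        rw [← hC, max_rpow_aux m p t hm hp0 ht]
        rw [← Real.exp_mul]
        rw [← Real.rpow_mul hN, mul_one_div_cancel hp0.ne', Real.rpow_one]
        rw [← Real.rpow_mul ht.le]
        rw [show lam/2 * (1/p) = lam/(2*p) from by ring,
          show -((lam₁ - a * γ) * t) * (1/p) = -((lam₁ - a * γ) * t / p) from by ring]
        ring
end

section
/- Let (X,d) be a metric space endowed with a Borel measure μ, and let m > 0, λ ∈ [0,m), p ∈ [1,∞), λ₁ ≥ 0, D > 0 and C₀ > 0. Let G : (0,∞) × X × X → ℝ be measurable with 0 ≤ G(t,x,y) ≤ C₀ · max{1, t^{−m/2}} · exp(−λ₁·t − d(x,y)²/(2Dt)) for all t > 0 and x, y ∈ X, and with ∫_X G(t,x,y) dμ(y) ≤ 1 for all t > 0 and x ∈ X. Let u₀ : X → ℝ be measurable and N ≥ 0 be such that ∫_{B(x,R)} |u₀|^p dμ ≤ N^p · R^λ for every x ∈ X and R > 0. Then there exists a constant C > 0, depending only on C₀, m, λ, p and D, such that for all t > 0 and all x ∈ X: ∫_X G(t,x,y)·|u₀(y)| dμ(y) ≤ C · (min{1,t})^{−m/(2p)}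 · t^{λ/(2p)} · e^{−λ₁ t/p} · N. -/
/-!
Hölder's inequality against the sub-Markovian measure `G(t,x,·) dμ` reduces the claim to a
bound on `∫ G(t,x,y) |u₀ y|^p dμ(y)`. After the Gaussian bound on `G`, cut `X` into the shells
`k √t ≤ d(x,y) < (k+1) √t`: on the `k`-th shell the Gaussian is at most `e^{-k²/(2D)}`, and the
Morrey bound on the ball of radius `(k+1) √t` gives mass at most `N^p ((k+1) √t)^λ`, so the sum
over shells is `N^p t^{λ/2}` times the convergent series `∑ (k+1)^λ e^{-k²/(2D)}`.
-/

open MeasureTheory Real Metric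
open scoped ENNReal
open ENNReal (ofReal)

lemma max_one_rpow_neg_eq_min_one_rpow_neg {t a : ℝ} (ht : 0 < t) (ha : 0 ≤ a) :
    max 1 (t ^ (-a)) = min 1 t ^ (-a) := by
  rcases le_total t 1 with h | h
  · rw [min_eq_right h, max_eq_right (one_le_rpow_of_pos_of_le_one_of_nonpos ht h (by linarith))]
  · rw [min_eq_left h, one_rpow, max_eq_left (rpow_le_one_of_one_le_of_nonpos h (by linarith))]

lemma summable_succ_rpow_mul_exp_neg_sq_div (lam : ℝ) {c : ℝ} (hc : 0 < c) :
    Summable fun k : ℕ => ((k : ℝ) + 1) ^ lam * exp (-((k : ℝ) ^ 2 / c)) := by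
  set n := ⌈lam⌉₊
  have hdom : Summable fun k : ℕ => ((k : ℝ) + 1) ^ n * exp (-c⁻¹ * ((k : ℝ) + 1)) := by
    simpa using (summable_nat_add_iff 1).2 (summable_pow_mul_exp_neg_nat_mul n (inv_pos.2 hc))
  refine (hdom.mul_left (exp c⁻¹)).of_nonneg_of_le (fun k => by positivity) fun k => ?_
  have hk : (1 : ℝ) ≤ k + 1 := by linarith [k.cast_nonneg (α := ℝ)]
  have hpow : ((k : ℝ) + 1) ^ lam ≤ ((k : ℝ) + 1) ^ n := by
    rw [← rpow_natCast]
    exact rpow_le_rpow_of_exponent_le hk (Nat.le_ceil lam)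
  -- `k ≤ k ^ 2` turns the Gaussian tail into a geometric one.
  have hexp : exp (-((k : ℝ) ^ 2 / c)) ≤ exp c⁻¹ * exp (-c⁻¹ * ((k : ℝ) + 1)) := by
    rw [← exp_add, exp_le_exp, div_eq_mul_inv]
    have : (k : ℝ) ≤ (k : ℝ) ^ 2 := by exact_mod_cast Nat.le_self_pow two_ne_zero k
    nlinarith [inv_pos.2 hc]
  calc ((k : ℝ) + 1) ^ lam * exp (-((k : ℝ) ^ 2 / c))
      ≤ ((k : ℝ) + 1) ^ n * (exp c⁻¹ * exp (-c⁻¹ * ((k : ℝ) + 1))) := by gcongr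
    _ = _ := by ring

noncomputable def gaussianAnnulusSum (lam c : ℝ) : ℝ :=
  ∑' k : ℕ, ((k : ℝ) + 1) ^ lam * exp (-((k : ℝ) ^ 2 / c))

lemma one_le_gaussianAnnulusSum (lam : ℝ) {c : ℝ} (hc : 0 < c) :
    1 ≤ gaussianAnnulusSum lam c := by
  simpa [gaussianAnnulusSum] using
    (summable_succ_rpow_mul_exp_neg_sq_div lam hc).le_tsum 0 fun k _ => by positivity

section Jensen

variable {α : Type*} [MeasurableSpace α]

lemma lintegral_le_lintegral_rpow_rpow_inv {ν : Measure α} (hν : ν Set.univ ≤ 1)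
    {f : α → ℝ≥0∞} (hf : AEMeasurable f ν) {p : ℝ} (hp : 1 ≤ p) :
    ∫⁻ a, f a ∂ν ≤ (∫⁻ a, f a ^ p ∂ν) ^ p⁻¹ := by
  rcases hp.eq_or_lt with rfl | hp
  · simp
  have hpq := Real.HolderConjugate.conjExponent hp
  calc ∫⁻ a, f a ∂ν = ∫⁻ a, (f * 1) a ∂ν := by simp
    _ ≤ (∫⁻ a, f a ^ p ∂ν) ^ (1 / p) *
          (∫⁻ _, 1 ^ p.conjExponent ∂ν) ^ (1 / p.conjExponent) :=
      ENNReal.lintegral_mul_le_Lp_mul_Lq ν hpq hf aemeasurable_const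
    _ ≤ (∫⁻ a, f a ^ p ∂ν) ^ p⁻¹ := by
      rw [one_div]
      refine mul_le_of_le_one_right' (ENNReal.rpow_le_one ?_ (by simp [hpq.symm.pos.le]))
      simpa using hν

lemma lintegral_mul_le_lintegral_mul_rpow_rpow_inv {μ : Measure α} {w f : α → ℝ≥0∞}
    (hw : AEMeasurable w μ) (hf : AEMeasurable f μ) (hw₁ : ∫⁻ a, w a ∂μ ≤ 1) {p : ℝ}
    (hp : 1 ≤ p) : ∫⁻ a, w a * f a ∂μ ≤ (∫⁻ a, w a * f a ^ p ∂μ) ^ p⁻¹ := by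
  have hν : μ.withDensity w Set.univ ≤ 1 := by simpa using hw₁
  have := lintegral_le_lintegral_rpow_rpow_inv hν
    (hf.mono' (withDensity_absolutelyContinuous μ w)) hp
  rwa [lintegral_withDensity_eq_lintegral_mul₀ hw hf,
    lintegral_withDensity_eq_lintegral_mul₀ hw (hf.pow_const p)] at this

end Jensen

section GaussianMorrey

variable {X : Type*} [PseudoMetricSpace X] [MeasurableSpace X] [OpensMeasurableSpace X]
  {μ : Measure X} {x : X} {g : X → ℝ≥0∞} {A lam c t : ℝ}

lemma setLIntegral_floor_dist_eq_exp_neg_dist_sq_mul_le (hc : 0 < c) (ht : 0 < t)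
    (hg : ∀ R > 0, ∫⁻ y in ball x R, g y ∂μ ≤ ofReal (A * R ^ lam)) (k : ℕ) :
    ∫⁻ y in {y | ⌊dist x y / √t⌋₊ = k},
        ofReal (exp (-(dist x y ^ 2 / (c * t)))) * g y ∂μ ≤
      ofReal (((k : ℝ) + 1) ^ lam * exp (-((k : ℝ) ^ 2 / c)) * (A * t ^ (lam / 2))) := by
  set shell := {y | ⌊dist x y / √t⌋₊ = k}
  have hs : 0 < √t := sqrt_pos.2 ht
  have hshell : MeasurableSet shell :=
    (Nat.measurable_floor.comp ((continuous_const.dist continuous_id).measurable.div_const _))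
      (measurableSet_singleton k)
  have hmem : ∀ y ∈ shell, k * √t ≤ dist x y ∧ dist x y < (k + 1) * √t := fun y hy => by
    have h := (Nat.floor_eq_iff (by positivity)).1 hy
    rwa [le_div_iff₀ hs, div_lt_iff₀ hs] at h
  have hgauss : ∀ y ∈ shell, ofReal (exp (-(dist x y ^ 2 / (c * t)))) * g y ≤
      ofReal (exp (-((k : ℝ) ^ 2 / c))) * g y := fun y hy => by
    gcongr ofReal (exp (-?_)) * _
    rw [div_le_div_iff₀ hc (by positivity), ← sq_sqrt ht.le]
    calc (k : ℝ) ^ 2 * (c * √t ^ 2) = (k * √t) ^ 2 * c := by ring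
      _ ≤ dist x y ^ 2 * c := by gcongr; exact (hmem y hy).1
  calc ∫⁻ y in shell, ofReal (exp (-(dist x y ^ 2 / (c * t)))) * g y ∂μ
      ≤ ∫⁻ y in shell, ofReal (exp (-((k : ℝ) ^ 2 / c))) * g y ∂μ :=
        setLIntegral_mono' hshell hgauss
    _ = ofReal (exp (-((k : ℝ) ^ 2 / c))) * ∫⁻ y in shell, g y ∂μ :=
        lintegral_const_mul' _ _ ENNReal.ofReal_ne_top
    _ ≤ ofReal (exp (-((k : ℝ) ^ 2 / c))) * ∫⁻ y in ball x ((k + 1) * √t), g y ∂μ := by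
        gcongr
        exact fun y hy => mem_ball'.2 (hmem y hy).2
    _ ≤ ofReal (exp (-((k : ℝ) ^ 2 / c))) * ofReal (A * ((k + 1) * √t) ^ lam) := by
        gcongr
        exact hg _ (by positivity)
    _ = _ := by
        rw [← ENNReal.ofReal_mul (exp_pos _).le, mul_rpow (by positivity) hs.le, sqrt_eq_rpow,
          ← rpow_mul ht.le]
        ring_nf

lemma lintegral_exp_neg_dist_sq_mul_le (hA : 0 ≤ A) (hc : 0 < c) (ht : 0 < t)
    (hg : ∀ R > 0, ∫⁻ y in ball x R, g y ∂μ ≤ ofReal (A * R ^ lam)) :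
    ∫⁻ y, ofReal (exp (-(dist x y ^ 2 / (c * t)))) * g y ∂μ ≤
      ofReal (gaussianAnnulusSum lam c * (A * t ^ (lam / 2))) := by
  have hcover : (⋃ k : ℕ, {y : X | ⌊dist x y / √t⌋₊ = k}) = Set.univ := by
    ext y; simp
  calc ∫⁻ y, ofReal (exp (-(dist x y ^ 2 / (c * t)))) * g y ∂μ
      = ∫⁻ y in ⋃ k : ℕ, {y | ⌊dist x y / √t⌋₊ = k},
          ofReal (exp (-(dist x y ^ 2 / (c * t)))) * g y ∂μ := by
        rw [hcover, Measure.restrict_univ]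
    _ ≤ ∑' k : ℕ, ∫⁻ y in {y | ⌊dist x y / √t⌋₊ = k},
          ofReal (exp (-(dist x y ^ 2 / (c * t)))) * g y ∂μ :=
        lintegral_iUnion_le _ _
    _ ≤ ∑' k : ℕ, ofReal
          (((k : ℝ) + 1) ^ lam * exp (-((k : ℝ) ^ 2 / c)) * (A * t ^ (lam / 2))) :=
        ENNReal.tsum_le_tsum (setLIntegral_floor_dist_eq_exp_neg_dist_sq_mul_le hc ht hg)
    _ = ofReal (gaussianAnnulusSum lam c * (A * t ^ (lam / 2))) := by
        rw [← ENNReal.ofReal_tsum_of_nonneg (fun k => by positivity)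
          ((summable_succ_rpow_mul_exp_neg_sq_div lam hc).mul_right _), tsum_mul_right,
          gaussianAnnulusSum]

lemma lintegral_ofReal_mul_rpow_le_of_le_exp_neg_dist_sq {k u : X → ℝ} {K p : ℝ}
    (hK : 0 ≤ K) (hA : 0 ≤ A) (hc : 0 < c) (ht : 0 < t) (hp : 0 ≤ p)
    (hk : ∀ y, k y ≤ K * exp (-(dist x y ^ 2 / (c * t))))
    (hu : ∀ R > 0, ∫⁻ y in ball x R, ofReal (|u y| ^ p) ∂μ ≤ ofReal (A * R ^ lam)) :
    ∫⁻ y, ofReal (k y) * ofReal |u y| ^ p ∂μ ≤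
      ofReal (K * (gaussianAnnulusSum lam c * (A * t ^ (lam / 2)))) := by
  calc ∫⁻ y, ofReal (k y) * ofReal |u y| ^ p ∂μ
      ≤ ∫⁻ y, ofReal K *
          (ofReal (exp (-(dist x y ^ 2 / (c * t)))) * ofReal (|u y| ^ p)) ∂μ := by
        refine lintegral_mono fun y => ?_
        rw [ENNReal.ofReal_rpow_of_nonneg (abs_nonneg _) hp, ← mul_assoc,
          ← ENNReal.ofReal_mul hK]
        gcongr
        exact hk y
    _ ≤ ofReal K * ofReal (gaussianAnnulusSum lam c * (A * t ^ (lam / 2))) := by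
        rw [lintegral_const_mul' _ _ ENNReal.ofReal_ne_top]
        gcongr
        exact lintegral_exp_neg_dist_sq_mul_le hA hc ht hu
    _ = _ := (ENNReal.ofReal_mul hK).symm

end GaussianMorrey

lemma heat_bound_rpow_inv_eq {C S b t N m lam ℓ p : ℝ} (hC : 0 ≤ C) (hS : 0 ≤ S)
    (hb : 0 < b) (ht : 0 < t) (hN : 0 ≤ N) (hp : 0 < p) :
    (C * b ^ (-(m / 2)) * exp (-(ℓ * t)) * (S * (N ^ p * t ^ (lam / 2)))) ^ p⁻¹ =
      (C * S) ^ p⁻¹ * b ^ (-(m / (2 * p))) * t ^ (lam / (2 * p)) * exp (-(ℓ * t / p)) * N := by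
  rw [show C * b ^ (-(m / 2)) * exp (-(ℓ * t)) * (S * (N ^ p * t ^ (lam / 2))) =
      C * S * b ^ (-(m / 2)) * t ^ (lam / 2) * exp (-(ℓ * t)) * N ^ p by ring,
    mul_rpow (by positivity) (by positivity), mul_rpow (by positivity) (by positivity),
    mul_rpow (by positivity) (by positivity), mul_rpow (by positivity) (by positivity),
    mul_rpow (by positivity) (by positivity), ← rpow_mul hb.le, ← rpow_mul ht.le, ← exp_mul,
    rpow_rpow_inv hN hp.ne']
  ring_nf

theorem dispersive_Morrey_to_Linfty_general
    {X : Type*} [MetricSpace X] [MeasurableSpace X] [BorelSpace X]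
    (μ : Measure X) (m lam p lam₁ D C₀ N : ℝ)
    (hm : 0 < m) (hp : 1 ≤ p)
    (hD : 0 < D) (hC₀ : 0 < C₀)
    (G : ℝ → X → X → ℝ)
    (hGmeas : Measurable fun q : ℝ × X × X => G q.1 q.2.1 q.2.2)
    (hGbd : ∀ t > (0 : ℝ), ∀ x y : X, G t x y ≤
      C₀ * max 1 (t ^ (-(m / 2))) * Real.exp (-(lam₁ * t) - dist x y ^ 2 / (2 * D * t)))
    (hGmarkov : ∀ t > (0 : ℝ), ∀ x : X, ∫⁻ y, ENNReal.ofReal (G t x y) ∂μ ≤ 1)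
    (u₀ : X → ℝ) (hu₀ : Measurable u₀) (hN : 0 ≤ N)
    (hmor : ∀ (x : X) (R : ℝ), 0 < R →
      ∫⁻ y in Metric.ball x R, ENNReal.ofReal (|u₀ y| ^ p) ∂μ ≤
        ENNReal.ofReal (N ^ p * R ^ lam)) :
    ∃ C > (0 : ℝ), ∀ t > (0 : ℝ), ∀ x : X,
      ∫⁻ y, ENNReal.ofReal (G t x y * |u₀ y|) ∂μ ≤
        ENNReal.ofReal (C * (min 1 t) ^ (-(m / (2 * p))) * t ^ (lam / (2 * p)) *
          Real.exp (-(lam₁ * t / p)) * N) := by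
  have hp₀ : 0 < p := one_pos.trans_le hp
  set S := gaussianAnnulusSum lam (2 * D)
  have hS : 0 < S := one_pos.trans_le (one_le_gaussianAnnulusSum lam (by positivity))
  refine ⟨(C₀ * S) ^ p⁻¹, by positivity, fun t ht x => ?_⟩
  have hGx : Measurable (G t x) := hGmeas.comp (measurable_const.prodMk measurable_prodMk_left)
  have hG : ∀ y, G t x y ≤
      C₀ * min 1 t ^ (-(m / 2)) * exp (-(lam₁ * t)) * exp (-(dist x y ^ 2 / (2 * D * t))) := by
    simpa only [max_one_rpow_neg_eq_min_one_rpow_neg ht (by positivity : 0 ≤ m / 2),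
      sub_eq_add_neg, exp_add, mul_assoc] using hGbd t ht x
  calc ∫⁻ y, ofReal (G t x y * |u₀ y|) ∂μ
      = ∫⁻ y, ofReal (G t x y) * ofReal |u₀ y| ∂μ := by
        simp_rw [ENNReal.ofReal_mul' (abs_nonneg _)]
    _ ≤ (∫⁻ y, ofReal (G t x y) * ofReal |u₀ y| ^ p ∂μ) ^ p⁻¹ :=
        lintegral_mul_le_lintegral_mul_rpow_rpow_inv hGx.ennreal_ofReal.aemeasurable
          hu₀.abs.ennreal_ofReal.aemeasurable (hGmarkov t ht x) hp
    _ ≤ (ofReal (C₀ * min 1 t ^ (-(m / 2)) * exp (-(lam₁ * t)) *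
          (S * (N ^ p * t ^ (lam / 2))))) ^ p⁻¹ := by
        gcongr
        exact lintegral_ofReal_mul_rpow_le_of_le_exp_neg_dist_sq (by positivity) (by positivity)
          (by positivity) ht hp₀.le hG (hmor x)
    _ = _ := by
        rw [ENNReal.ofReal_rpow_of_nonneg (by positivity) (by positivity),
          heat_bound_rpow_inv_eq hC₀.le hS.le (lt_min one_pos ht) ht hN hp₀]

/-- Abstract form of the dispersive estimate `e^{tΔ_g} : M_{p,λ} → L^∞`
(Theorem 3.1(ii)): a Markovian kernel with Grigor'yan's Gaussian bound
`C₀ max{1,t^{-m/2}} e^{-λ₁ t - d(x,y)²/(2Dt)}`, applied to data with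
the Morrey bound `∫_{B(x,R)} |u₀|^p ≤ N^p R^λ`. -/
theorem dispersive_Morrey_to_Linfty
    {X : Type*} [MetricSpace X] [MeasurableSpace X] [BorelSpace X]
    (μ : Measure X) (m lam p lam₁ D C₀ N : ℝ)
    (hm : 0 < m) (hlam0 : 0 ≤ lam) (hlamm : lam < m) (hp : 1 ≤ p)
    (hlam₁ : 0 ≤ lam₁) (hD : 0 < D) (hC₀ : 0 < C₀)
    (G : ℝ → X → X → ℝ)
    (hGmeas : Measurable fun q : ℝ × X × X => G q.1 q.2.1 q.2.2)
    (hG0 : ∀ t > (0 : ℝ), ∀ x y : X, 0 ≤ G t x y)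
    (hGbd : ∀ t > (0 : ℝ), ∀ x y : X, G t x y ≤
      C₀ * max 1 (t ^ (-(m / 2))) * Real.exp (-(lam₁ * t) - dist x y ^ 2 / (2 * D * t)))
    (hGmarkov : ∀ t > (0 : ℝ), ∀ x : X, ∫⁻ y, ENNReal.ofReal (G t x y) ∂μ ≤ 1)
    (u₀ : X → ℝ) (hu₀ : Measurable u₀) (hN : 0 ≤ N)
    (hmor : ∀ (x : X) (R : ℝ), 0 < R →
      ∫⁻ y in Metric.ball x R, ENNReal.ofReal (|u₀ y| ^ p) ∂μ ≤
        ENNReal.ofReal (N ^ p * R ^ lam)) :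
    ∃ C > (0 : ℝ), ∀ t > (0 : ℝ), ∀ x : X,
      ∫⁻ y, ENNReal.ofReal (G t x y * |u₀ y|) ∂μ ≤
        ENNReal.ofReal (C * (min 1 t) ^ (-(m / (2 * p))) * t ^ (lam / (2 * p)) *
          Real.exp (-(lam₁ * t / p)) * N) :=
  dispersive_Morrey_to_Linfty_general μ m lam p lam₁ D C₀ N hm hp hD hC₀ G hGmeas hGbd hGmarkov u₀
    hu₀ hN hmor
end

section
/- Let (X,d) be a metric space endowed with a Borel measure μ satisfying μ(B(x,R)) ≤ C_V · R^m for all x ∈ X and R > 0, where m > 0 and C_V > 0. Let p ∈ (1,∞), λ ∈ [0,m), and let S : X × X → ℝ be measurable with |S(x,y)| ≤ C_S · d(x,y)^{−m} for all x ≠ y. Assume that for every f ∈ L^p(μ) the integral ∫_X |S(x,y) f(y)| dμ(y) is finite for μ-almost every x, and that the operator T f(x) = ∫_X S(x,y) f(y) dμ(y) satisfies ‖T f‖_{L^p(μ)} ≤ C_T · ‖f‖_{L^p(μ)} for every f ∈ L^p(μ). Then there exists C > 0, depending only on m, p, λ, C_V, C_S and C_T, with the following property: for every measurable f : X → ℝ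 and N ≥ 0 such that ∫_{B(x,R)} |f|^p dμ ≤ N^p R^λ for all x ∈ X and R > 0, and for every x₀ ∈ X and R > 0, the function y ↦ S(x,y) f(y) is μ-integrable for μ-almost every x ∈ B(x₀,R), and ∫_{B(x₀,R)} | ∫_X S(x,y) f(y) dμ(y) |^p dμ(x) ≤ C^p · N^p · R^λ. -/
/-!
Split `f = f₁ + f₂` with `f₁ = 𝟙_{B(x₀,2R)} f`. The Morrey bound at the single scale `2R` puts
`f₁` in `Lᵖ`, and the `Lᵖ`-boundedness of `T` gives `∫_{B(x₀,R)} |T f₁|ᵖ ≲ Nᵖ R^λ`.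
For `x ∈ B(x₀,R)` and `y ∉ B(x₀,2R)` we have `d(y,x₀) ≤ 2 d(x,y)`, so there the kernel is at most
`C_S 2ᵐ d(y,x₀)⁻ᵐ`. Hölder's inequality and the volume bound give
`∫_{B(z,ρ)} |f| ≲ N ρ^(m - (m-λ)/p)`; summed over the dyadic annuli `2ʲ·2R ≤ d(y,x₀) < 2ʲ⁺¹·2R`
this is a geometric series of ratio `2^(-(m-λ)/p) < 1`, hence `|T f₂| ≲ N R^(-(m-λ)/p)` uniformly
on `B(x₀,R)`. Since `μ(B(x₀,R)) ≲ Rᵐ`, the `p`-th power of this integrates to `≲ Nᵖ R^λ`.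
-/

open MeasureTheory Metric Set
open scoped ENNReal

lemma ofReal_abs_rpow (t : ℝ) {p : ℝ} (hp : 0 ≤ p) : ENNReal.ofReal (|t| ^ p) = ‖t‖ₑ ^ p := by
  rw [Real.enorm_eq_ofReal_abs, ENNReal.ofReal_rpow_of_nonneg (abs_nonneg t) hp]

lemma mul_mul_rpow_rpow {c N ρ : ℝ} (hc : 0 ≤ c) (hN : 0 ≤ N) (hρ : 0 ≤ ρ) (s p : ℝ) :
    (c * N * ρ ^ s) ^ p = c ^ p * N ^ p * ρ ^ (s * p) := by
  rw [Real.mul_rpow (by positivity) (by positivity), Real.mul_rpow hc hN, ← Real.rpow_mul hρ]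

lemma two_rpow_neg_lt_one {b : ℝ} (hb : 0 < b) : (2 : ℝ) ^ (-b) < 1 :=
  Real.rpow_lt_one_of_one_lt_of_neg one_lt_two (neg_neg_of_pos hb)

lemma lintegral_enorm_rpow_eq_eLpNorm_rpow {α ε : Type*} [MeasurableSpace α] [ENorm ε]
    (ν : Measure α) (g : α → ε) {p : ℝ} (hp : 0 < p) :
    ∫⁻ x, ‖g x‖ₑ ^ p ∂ν = eLpNorm g (ENNReal.ofReal p) ν ^ p := by
  rw [eLpNorm_eq_eLpNorm' (by simpa using hp) ENNReal.ofReal_ne_top,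
    ENNReal.toReal_ofReal hp.le, lintegral_rpow_enorm_eq_rpow_eLpNorm' hp]

lemma setLIntegral_enorm_rpow_le_eLpNorm_rpow {α ε : Type*} [MeasurableSpace α] [ENorm ε]
    (μ : Measure α) (s : Set α) (g : α → ε) {p : ℝ} (hp : 0 < p) :
    ∫⁻ x in s, ‖g x‖ₑ ^ p ∂μ ≤ eLpNorm g (ENNReal.ofReal p) μ ^ p :=
  (setLIntegral_le_lintegral _ _).trans_eq (lintegral_enorm_rpow_eq_eLpNorm_rpow _ _ hp)

lemma lintegral_rpow_le_of_ae_le_add {α : Type*} [MeasurableSpace α] {ν : Measure α}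
    {u v : α → ℝ≥0∞} {M : ℝ≥0∞} {p : ℝ} (hp : 1 ≤ p) (h : ∀ᵐ x ∂ν, u x ≤ v x + M) :
    ∫⁻ x, u x ^ p ∂ν ≤ 2 ^ (p - 1) * (∫⁻ x, v x ^ p ∂ν + M ^ p * ν univ) := by
  calc ∫⁻ x, u x ^ p ∂ν ≤ ∫⁻ x, 2 ^ (p - 1) * (v x ^ p + M ^ p) ∂ν := by
        refine lintegral_mono_ae (h.mono fun x hx => ?_)
        exact (ENNReal.rpow_le_rpow hx (by linarith)).trans
          (ENNReal.rpow_add_le_mul_rpow_add_rpow _ _ hp)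
    _ = 2 ^ (p - 1) * (∫⁻ x, v x ^ p ∂ν + M ^ p * ν univ) := by
        rw [lintegral_const_mul' _ _
            (ENNReal.rpow_ne_top_of_nonneg (by linarith) ENNReal.ofNat_ne_top),
          lintegral_add_right _ measurable_const, lintegral_const]

lemma setLIntegral_enorm_rpow_le_morrey_of_ae_le_add {α ε : Type*} [MeasurableSpace α] [ENorm ε]
    {μ : Measure α} {s : Set α} {g g₁ : α → ε} {m p lam A K C_V N ρ : ℝ} (hp : 1 ≤ p)
    (hA : 0 ≤ A) (hK : 0 ≤ K) (hCV : 0 ≤ C_V) (hN : 0 ≤ N) (hρ : 0 < ρ)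
    (h : ∀ᵐ x ∂μ.restrict s,
      ‖g x‖ₑ ≤ ‖g₁ x‖ₑ + ENNReal.ofReal (K * N * ρ ^ (-((m - lam) / p))))
    (h₁ : ∫⁻ x in s, ‖g₁ x‖ₑ ^ p ∂μ ≤ ENNReal.ofReal (A * N * ρ ^ (lam / p)) ^ p)
    (hs : μ s ≤ ENNReal.ofReal (C_V * ρ ^ m)) :
    ∫⁻ x in s, ‖g x‖ₑ ^ p ∂μ ≤
      ENNReal.ofReal (2 ^ (p - 1) * (A ^ p + K ^ p * C_V) * N ^ p * ρ ^ lam) := by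
  have hp0 : 0 < p := by linarith
  have hexp : ρ ^ (-((m - lam) / p) * p) * ρ ^ m = ρ ^ lam := by
    rw [← Real.rpow_add hρ]
    congr 1
    field_simp
    ring
  have htwo : (2 : ℝ≥0∞) ^ (p - 1) = ENNReal.ofReal (2 ^ (p - 1)) := by
    rw [← ENNReal.ofReal_rpow_of_nonneg zero_le_two (by linarith), ENNReal.ofReal_ofNat]
  calc ∫⁻ x in s, ‖g x‖ₑ ^ p ∂μ
      ≤ 2 ^ (p - 1) * (∫⁻ x in s, ‖g₁ x‖ₑ ^ p ∂μ +
          ENNReal.ofReal (K * N * ρ ^ (-((m - lam) / p))) ^ p * μ s) := by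
        simpa using lintegral_rpow_le_of_ae_le_add hp h
    _ ≤ 2 ^ (p - 1) * (ENNReal.ofReal (A * N * ρ ^ (lam / p)) ^ p +
          ENNReal.ofReal (K * N * ρ ^ (-((m - lam) / p))) ^ p *
            ENNReal.ofReal (C_V * ρ ^ m)) := by
        gcongr
    _ = ENNReal.ofReal (2 ^ (p - 1) * (A ^ p + K ^ p * C_V) * N ^ p * ρ ^ lam) := by
        rw [ENNReal.ofReal_rpow_of_nonneg (by positivity) hp0.le,
          ENNReal.ofReal_rpow_of_nonneg (by positivity) hp0.le,
          ← ENNReal.ofReal_mul (by positivity),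
          ← ENNReal.ofReal_add (by positivity) (by positivity), htwo,
          ← ENNReal.ofReal_mul (by positivity)]
        congr 1
        rw [mul_mul_rpow_rpow hA hN hρ.le, mul_mul_rpow_rpow hK hN hρ.le,
          div_mul_cancel₀ _ hp0.ne']
        linear_combination 2 ^ (p - 1) * K ^ p * N ^ p * C_V * hexp

section MetricGeometry

variable {X : Type*} [PseudoMetricSpace X]

lemma dist_le_two_mul_dist_of_mem_ball_of_notMem_ball {x y z : X} {r : ℝ} (hx : x ∈ ball z r)
    (hy : y ∉ ball z (2 * r)) : dist y z ≤ 2 * dist x y := by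
  rw [mem_ball] at hx
  rw [mem_ball, not_lt] at hy
  linarith [dist_triangle y x z, dist_comm x y]

lemma compl_ball_subset_iUnion_annulus (z : X) {r : ℝ} (hr : 0 < r) :
    (ball z r)ᶜ ⊆ ⋃ j : ℕ, ball z (2 * (2 ^ j * r)) \ ball z (2 ^ j * r) := by
  intro y hy
  rw [mem_compl_iff, mem_ball, not_lt] at hy
  obtain ⟨j, hj, hj'⟩ := exists_nat_pow_near ((one_le_div hr).2 hy) one_lt_two
  refine mem_iUnion.2 ⟨j, ?_, ?_⟩
  · rw [mem_ball, ← mul_assoc, ← pow_succ']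
    exact (div_lt_iff₀ hr).1 hj'
  · rw [mem_ball, not_lt]
    exact (le_div_iff₀ hr).1 hj

lemma abs_kernel_le_of_mem_ball_of_notMem_ball {S : X → X → ℝ} {m C_S : ℝ}
    (hSbd : ∀ x y : X, x ≠ y → |S x y| ≤ C_S * dist x y ^ (-m)) (hm : 0 ≤ m) (hCS : 0 ≤ C_S)
    {x y z : X} {r : ℝ} (hx : x ∈ ball z r) (hy : y ∉ ball z (2 * r)) :
    |S x y| ≤ C_S * 2 ^ m * dist y z ^ (-m) := by
  have hyz := dist_le_two_mul_dist_of_mem_ball_of_notMem_ball hx hy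
  have hpos : 0 < dist y z / 2 := by
    rw [mem_ball] at hx
    rw [mem_ball, not_lt] at hy
    linarith [dist_nonneg (x := x) (y := z)]
  have hxy : x ≠ y := by
    rintro rfl
    rw [dist_self] at hyz
    linarith
  calc |S x y| ≤ C_S * dist x y ^ (-m) := hSbd x y hxy
    _ ≤ C_S * (dist y z / 2) ^ (-m) := by
        gcongr C_S * ?_
        exact Real.rpow_le_rpow_of_nonpos hpos (by linarith) (neg_nonpos.2 hm)
    _ = C_S * 2 ^ m * dist y z ^ (-m) := by
        rw [Real.div_rpow dist_nonneg zero_le_two, Real.rpow_neg zero_le_two, div_inv_eq_mul]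
        ring

end MetricGeometry

section Morrey

variable {X : Type*} [PseudoMetricSpace X] [MeasurableSpace X]

def VolumeUpperBound (μ : Measure X) (C_V m : ℝ) : Prop :=
  ∀ (x : X) (R : ℝ), 0 < R → μ (ball x R) ≤ ENNReal.ofReal (C_V * R ^ m)

def MorreyBound (μ : Measure X) (p lam N : ℝ) (f : X → ℝ) : Prop :=
  ∀ (x : X) (R : ℝ), 0 < R →
    ∫⁻ y in ball x R, ENNReal.ofReal (|f y| ^ p) ∂μ ≤ ENNReal.ofReal (N ^ p * R ^ lam)

/-- One dyadic annulus contributes `C_V ^ (1 - 1/p) * 2 ^ (m - (m - λ)/p)` (times `N r^(-(m-λ)/p)`),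
and the denominator is the sum of the geometric series over the dyadic scales. -/
noncomputable def morreyTailConst (m p lam C_V : ℝ) : ℝ :=
  C_V ^ (1 - p⁻¹) * 2 ^ (m - (m - lam) / p) / (1 - 2 ^ (-((m - lam) / p)))

lemma morreyTailConst_nonneg {m p lam C_V : ℝ} (hp : 0 < p) (hlam : lam < m) (hCV : 0 ≤ C_V) :
    0 ≤ morreyTailConst m p lam C_V := by
  have := two_rpow_neg_lt_one (div_pos (sub_pos.2 hlam) hp)
  have : 0 < 1 - (2 : ℝ) ^ (-((m - lam) / p)) := by linarith
  unfold morreyTailConst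
  positivity

variable {μ : Measure X} {m p lam C_V N : ℝ} {f : X → ℝ}

namespace MorreyBound

lemma eLpNorm_restrict_ball_le (hf : MorreyBound μ p lam N f) (hp : 0 < p) (hN : 0 ≤ N)
    (z : X) {ρ : ℝ} (hρ : 0 < ρ) :
    eLpNorm f (ENNReal.ofReal p) (μ.restrict (ball z ρ)) ≤
      ENNReal.ofReal (N * ρ ^ (lam / p)) := by
  rw [← ENNReal.rpow_le_rpow_iff hp, ← lintegral_enorm_rpow_eq_eLpNorm_rpow _ _ hp,
    ENNReal.ofReal_rpow_of_nonneg (by positivity) hp.le, Real.mul_rpow hN (by positivity),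
    ← Real.rpow_mul hρ.le, div_mul_cancel₀ _ hp.ne']
  simpa only [ofReal_abs_rpow _ hp.le] using hf z ρ hρ

lemma setLIntegral_ball_le (hf : MorreyBound μ p lam N f) (hfm : AEStronglyMeasurable f μ)
    (hvol : VolumeUpperBound μ C_V m) (hp : 1 ≤ p) (hN : 0 ≤ N) (hCV : 0 ≤ C_V) (z : X)
    {ρ : ℝ} (hρ : 0 < ρ) :
    ∫⁻ y in ball z ρ, ‖f y‖ₑ ∂μ ≤
      ENNReal.ofReal (N * C_V ^ (1 - p⁻¹) * ρ ^ (m - (m - lam) / p)) := by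
  have hp0 : 0 < p := by linarith
  have hq : 0 ≤ 1 - p⁻¹ := sub_nonneg.2 (inv_le_one_of_one_le₀ hp)
  rw [← eLpNorm_one_eq_lintegral_enorm]
  calc eLpNorm f 1 (μ.restrict (ball z ρ))
      ≤ eLpNorm f (ENNReal.ofReal p) (μ.restrict (ball z ρ)) * μ (ball z ρ) ^ (1 - p⁻¹) := by
        simpa [ENNReal.toReal_ofReal hp0.le] using
          eLpNorm_le_eLpNorm_mul_rpow_measure_univ (ENNReal.one_le_ofReal.2 hp) hfm.restrict
    _ ≤ ENNReal.ofReal (N * ρ ^ (lam / p)) * ENNReal.ofReal (C_V * ρ ^ m) ^ (1 - p⁻¹) := by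
        gcongr
        exacts [hf.eLpNorm_restrict_ball_le hp0 hN z hρ, hvol z ρ hρ]
    _ = ENNReal.ofReal (N * C_V ^ (1 - p⁻¹) * ρ ^ (m - (m - lam) / p)) := by
        rw [ENNReal.ofReal_rpow_of_nonneg (by positivity) hq,
          ← ENNReal.ofReal_mul (by positivity)]
        congr 1
        rw [Real.mul_rpow hCV (by positivity), ← Real.rpow_mul hρ.le,
          show m - (m - lam) / p = lam / p + m * (1 - p⁻¹) by ring, Real.rpow_add hρ]
        ring

variable [OpensMeasurableSpace X]

lemma eLpNorm_indicator_ball_le (hf : MorreyBound μ p lam N f) (hp : 0 < p) (hN : 0 ≤ N)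
    (z : X) {ρ : ℝ} (hρ : 0 < ρ) :
    eLpNorm ((ball z ρ).indicator f) (ENNReal.ofReal p) μ ≤ ENNReal.ofReal (N * ρ ^ (lam / p)) := by
  rw [eLpNorm_indicator_eq_eLpNorm_restrict measurableSet_ball]
  exact hf.eLpNorm_restrict_ball_le hp hN z hρ

lemma setLIntegral_annulus_le (hf : MorreyBound μ p lam N f) (hfm : AEStronglyMeasurable f μ)
    (hvol : VolumeUpperBound μ C_V m) (hm : 0 ≤ m) (hp : 1 ≤ p) (hN : 0 ≤ N) (hCV : 0 ≤ C_V)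
    (z : X) {ρ : ℝ} (hρ : 0 < ρ) :
    ∫⁻ y in ball z (2 * ρ) \ ball z ρ, ENNReal.ofReal (dist y z ^ (-m)) * ‖f y‖ₑ ∂μ ≤
      ENNReal.ofReal
        (N * C_V ^ (1 - p⁻¹) * 2 ^ (m - (m - lam) / p) * ρ ^ (-((m - lam) / p))) := by
  calc ∫⁻ y in ball z (2 * ρ) \ ball z ρ, ENNReal.ofReal (dist y z ^ (-m)) * ‖f y‖ₑ ∂μ
      ≤ ∫⁻ y in ball z (2 * ρ) \ ball z ρ, ENNReal.ofReal (ρ ^ (-m)) * ‖f y‖ₑ ∂μ := by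
        refine setLIntegral_mono' (measurableSet_ball.diff measurableSet_ball) fun y hy => ?_
        gcongr ENNReal.ofReal ?_ * _
        exact Real.rpow_le_rpow_of_nonpos hρ (not_lt.1 hy.2) (neg_nonpos.2 hm)
    _ = ENNReal.ofReal (ρ ^ (-m)) * ∫⁻ y in ball z (2 * ρ) \ ball z ρ, ‖f y‖ₑ ∂μ :=
        lintegral_const_mul' _ _ ENNReal.ofReal_ne_top
    _ ≤ ENNReal.ofReal (ρ ^ (-m)) *
          ENNReal.ofReal (N * C_V ^ (1 - p⁻¹) * (2 * ρ) ^ (m - (m - lam) / p)) := by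
        gcongr
        exact (lintegral_mono_set sdiff_subset).trans
          (hf.setLIntegral_ball_le hfm hvol hp hN hCV z (by positivity))
    _ = ENNReal.ofReal
          (N * C_V ^ (1 - p⁻¹) * 2 ^ (m - (m - lam) / p) * ρ ^ (-((m - lam) / p))) := by
        rw [← ENNReal.ofReal_mul (by positivity)]
        congr 1
        rw [Real.mul_rpow zero_le_two hρ.le,
          show -((m - lam) / p) = -m + (m - (m - lam) / p) by ring, Real.rpow_add hρ]
        ring

lemma setLIntegral_compl_ball_le (hf : MorreyBound μ p lam N f) (hfm : AEStronglyMeasurable f μ)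
    (hvol : VolumeUpperBound μ C_V m) (hm : 0 ≤ m) (hp : 1 ≤ p) (hlam : lam < m) (hN : 0 ≤ N)
    (hCV : 0 ≤ C_V) (z : X) {r : ℝ} (hr : 0 < r) :
    ∫⁻ y in (ball z r)ᶜ, ENNReal.ofReal (dist y z ^ (-m)) * ‖f y‖ₑ ∂μ ≤
      ENNReal.ofReal (morreyTailConst m p lam C_V * N * r ^ (-((m - lam) / p))) := by
  set b := (m - lam) / p
  set c := N * C_V ^ (1 - p⁻¹) * 2 ^ (m - b)
  have hq : (2 : ℝ) ^ (-b) < 1 := two_rpow_neg_lt_one (div_pos (sub_pos.2 hlam) (by linarith))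
  have hscale (j : ℕ) : c * (2 ^ j * r) ^ (-b) = c * r ^ (-b) * ((2 : ℝ) ^ (-b)) ^ j := by
    rw [Real.mul_rpow (by positivity) hr.le, Real.rpow_pow_comm zero_le_two]
    ring
  calc ∫⁻ y in (ball z r)ᶜ, ENNReal.ofReal (dist y z ^ (-m)) * ‖f y‖ₑ ∂μ
      ≤ ∫⁻ y in ⋃ j : ℕ, ball z (2 * (2 ^ j * r)) \ ball z (2 ^ j * r),
          ENNReal.ofReal (dist y z ^ (-m)) * ‖f y‖ₑ ∂μ :=
        lintegral_mono_set (compl_ball_subset_iUnion_annulus z hr)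
    _ ≤ ∑' j : ℕ, ∫⁻ y in ball z (2 * (2 ^ j * r)) \ ball z (2 ^ j * r),
          ENNReal.ofReal (dist y z ^ (-m)) * ‖f y‖ₑ ∂μ :=
        lintegral_iUnion_le _ _
    _ ≤ ∑' j : ℕ, ENNReal.ofReal (c * r ^ (-b) * ((2 : ℝ) ^ (-b)) ^ j) :=
        ENNReal.tsum_le_tsum fun j => (hf.setLIntegral_annulus_le hfm hvol hm hp hN hCV z
          (by positivity)).trans_eq (by rw [hscale])
    _ = ENNReal.ofReal (c * r ^ (-b) * ∑' j : ℕ, ((2 : ℝ) ^ (-b)) ^ j) := by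
        rw [← ENNReal.ofReal_tsum_of_nonneg (fun j => by positivity)
          ((summable_geometric_of_lt_one (by positivity) hq).mul_left _), tsum_mul_left]
    _ = ENNReal.ofReal (morreyTailConst m p lam C_V * N * r ^ (-b)) := by
        rw [tsum_geometric_of_lt_one (by positivity) hq, morreyTailConst]
        congr 1
        simp only [c, b]
        ring

lemma lintegral_kernel_mul_indicator_compl_ball_le (hf : MorreyBound μ p lam N f)
    (hfm : AEStronglyMeasurable f μ) (hvol : VolumeUpperBound μ C_V m) {S : X → X → ℝ}
    {C_S : ℝ} (hSbd : ∀ x y : X, x ≠ y → |S x y| ≤ C_S * dist x y ^ (-m)) (hm : 0 ≤ m)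
    (hp : 1 ≤ p) (hlam : lam < m) (hN : 0 ≤ N) (hCV : 0 ≤ C_V) (hCS : 0 ≤ C_S) {x z : X}
    {R : ℝ} (hx : x ∈ ball z R) :
    ∫⁻ y, ‖S x y * (ball z (2 * R))ᶜ.indicator f y‖ₑ ∂μ ≤
      ENNReal.ofReal (C_S * 2 ^ m * morreyTailConst m p lam C_V * N *
        (2 * R) ^ (-((m - lam) / p))) := by
  have hR : 0 < R := dist_nonneg.trans_lt hx
  simp_rw [← indicator_mul_right, enorm_indicator_eq_indicator_enorm]
  rw [lintegral_indicator measurableSet_ball.compl]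
  calc ∫⁻ y in (ball z (2 * R))ᶜ, ‖S x y * f y‖ₑ ∂μ
      ≤ ∫⁻ y in (ball z (2 * R))ᶜ,
          ENNReal.ofReal (C_S * 2 ^ m) * (ENNReal.ofReal (dist y z ^ (-m)) * ‖f y‖ₑ) ∂μ := by
        refine setLIntegral_mono' measurableSet_ball.compl fun y hy => ?_
        rw [enorm_mul, ← mul_assoc, ← ENNReal.ofReal_mul (by positivity),
          Real.enorm_eq_ofReal_abs]
        gcongr
        exact abs_kernel_le_of_mem_ball_of_notMem_ball hSbd hm hCS hx hy
    _ = ENNReal.ofReal (C_S * 2 ^ m) *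
          ∫⁻ y in (ball z (2 * R))ᶜ, ENNReal.ofReal (dist y z ^ (-m)) * ‖f y‖ₑ ∂μ :=
        lintegral_const_mul' _ _ ENNReal.ofReal_ne_top
    _ ≤ ENNReal.ofReal (C_S * 2 ^ m) * ENNReal.ofReal
          (morreyTailConst m p lam C_V * N * (2 * R) ^ (-((m - lam) / p))) := by
        gcongr
        exact hf.setLIntegral_compl_ball_le hfm hvol hm hp hlam hN hCV z (by positivity)
    _ = ENNReal.ofReal (C_S * 2 ^ m * morreyTailConst m p lam C_V * N *
          (2 * R) ^ (-((m - lam) / p))) := by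
        rw [← ENNReal.ofReal_mul (by positivity)]
        congr 1
        ring

lemma ae_integrable_and_enorm_integral_le (hf : MorreyBound μ p lam N f) (hfm : Measurable f)
    (hvol : VolumeUpperBound μ C_V m) {S : X → X → ℝ} {C_S : ℝ}
    (hSmeas : Measurable fun w : X × X => S w.1 w.2)
    (hSbd : ∀ x y : X, x ≠ y → |S x y| ≤ C_S * dist x y ^ (-m)) (hm : 0 ≤ m) (hp : 1 ≤ p)
    (hlam : lam < m) (hN : 0 ≤ N) (hCV : 0 ≤ C_V) (hCS : 0 ≤ C_S) (z : X) (R : ℝ)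
    (hnear : ∀ᵐ x ∂μ, Integrable (fun y => S x y * (ball z (2 * R)).indicator f y) μ) :
    ∀ᵐ x ∂μ.restrict (ball z R), Integrable (fun y => S x y * f y) μ ∧
      ‖∫ y, S x y * f y ∂μ‖ₑ ≤ ‖∫ y, S x y * (ball z (2 * R)).indicator f y ∂μ‖ₑ +
        ENNReal.ofReal (C_S * 2 ^ m * morreyTailConst m p lam C_V * N *
          (2 * R) ^ (-((m - lam) / p))) := by
  filter_upwards [ae_restrict_of_ae hnear, ae_restrict_mem measurableSet_ball] with x h₁ hx
  have hfar := hf.lintegral_kernel_mul_indicator_compl_ball_le hfm.aestronglyMeasurable hvol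
    hSbd hm hp hlam hN hCV hCS hx
  have h₂ : Integrable (fun y => S x y * (ball z (2 * R))ᶜ.indicator f y) μ :=
    ⟨((hSmeas.comp measurable_prodMk_left).mul
      (hfm.indicator measurableSet_ball.compl)).aestronglyMeasurable,
      hasFiniteIntegral_iff_enorm.2 (hfar.trans_lt ENNReal.ofReal_lt_top)⟩
  have hsplit : (fun y => S x y * f y) = (fun y => S x y * (ball z (2 * R)).indicator f y) +
      fun y => S x y * (ball z (2 * R))ᶜ.indicator f y := by
    ext y
    simp only [Pi.add_apply, ← mul_add, indicator_self_add_compl_apply]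
  rw [hsplit, integral_add' h₁ h₂]
  exact ⟨h₁.add h₂, (enorm_add_le _ _).trans
    (add_le_add_right ((enorm_integral_le_lintegral_enorm _).trans hfar) _)⟩

end MorreyBound

end Morrey

theorem CZ_operator_Morrey_bounded_general
    {X : Type*} [MetricSpace X] [MeasurableSpace X] [BorelSpace X]
    (μ : Measure X) (m p lam C_V C_S C_T : ℝ)
    (hm : 0 < m) (hp1 : 1 < p) (hlamm : lam < m)
    (hCV : 0 < C_V) (hCS : 0 < C_S) (hCT : 0 < C_T)
    (hvol : ∀ (x : X) (R : ℝ), 0 < R → μ (Metric.ball x R) ≤ ENNReal.ofReal (C_V * R ^ m))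
    (S : X → X → ℝ)
    (hSmeas : Measurable fun w : X × X => S w.1 w.2)
    (hSbd : ∀ x y : X, x ≠ y → |S x y| ≤ C_S * dist x y ^ (-m))
    (hTae : ∀ f : X → ℝ, MemLp f (ENNReal.ofReal p) μ →
      ∀ᵐ x ∂μ, Integrable (fun y => S x y * f y) μ)
    (hTbd : ∀ f : X → ℝ, MemLp f (ENNReal.ofReal p) μ →
      eLpNorm (fun x => ∫ y, S x y * f y ∂μ) (ENNReal.ofReal p) μ ≤
        ENNReal.ofReal C_T * eLpNorm f (ENNReal.ofReal p) μ) :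
    ∃ C > (0 : ℝ), ∀ f : X → ℝ, Measurable f → ∀ N : ℝ, 0 ≤ N →
      (∀ (x : X) (R : ℝ), 0 < R →
        ∫⁻ y in Metric.ball x R, ENNReal.ofReal (|f y| ^ p) ∂μ ≤
          ENNReal.ofReal (N ^ p * R ^ lam)) →
      ∀ (x₀ : X) (R : ℝ), 0 < R →
        (∀ᵐ x ∂μ.restrict (Metric.ball x₀ R), Integrable (fun y => S x y * f y) μ) ∧
        ∫⁻ x in Metric.ball x₀ R, ENNReal.ofReal (|∫ y, S x y * f y ∂μ| ^ p) ∂μ ≤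
          ENNReal.ofReal (C ^ p * N ^ p * R ^ lam) := by
  have hp0 : 0 < p := by linarith
  set K := C_S * 2 ^ m * morreyTailConst m p lam C_V
  have hK : 0 ≤ K := by
    have := morreyTailConst_nonneg hp0 hlamm hCV.le
    positivity
  refine ⟨(2 ^ (p - 1) * (C_T ^ p + K ^ p * C_V) * 2 ^ lam) ^ p⁻¹, by positivity,
    fun f hf N hN hMorrey x₀ R hR => ?_⟩
  set f₁ := (ball x₀ (2 * R)).indicator f
  have hf₁ : eLpNorm f₁ (ENNReal.ofReal p) μ ≤ ENNReal.ofReal (N * (2 * R) ^ (lam / p)) :=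
    MorreyBound.eLpNorm_indicator_ball_le hMorrey hp0 hN x₀ (by positivity)
  have hf₁Lp : MemLp f₁ (ENNReal.ofReal p) μ :=
    ⟨(hf.indicator measurableSet_ball).aestronglyMeasurable, hf₁.trans_lt ENNReal.ofReal_lt_top⟩
  have hsplit := MorreyBound.ae_integrable_and_enorm_integral_le hMorrey hf hvol hSmeas hSbd
    hm.le hp1.le hlamm hN hCV.le hCS.le x₀ R (hTae f₁ hf₁Lp)
  refine ⟨hsplit.mono fun x hx => hx.1, ?_⟩
  have hnear : ∫⁻ x in ball x₀ R, ‖∫ y, S x y * f₁ y ∂μ‖ₑ ^ p ∂μ ≤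
      ENNReal.ofReal (C_T * N * (2 * R) ^ (lam / p)) ^ p := by
    refine (setLIntegral_enorm_rpow_le_eLpNorm_rpow _ _ _ hp0).trans ?_
    rw [mul_assoc, ENNReal.ofReal_mul hCT.le]
    gcongr
    exact (hTbd f₁ hf₁Lp).trans (by gcongr)
  have hball : μ (ball x₀ R) ≤ ENNReal.ofReal (C_V * (2 * R) ^ m) :=
    (measure_mono (ball_subset_ball (by linarith))).trans (hvol x₀ _ (by positivity))
  simp_rw [ofReal_abs_rpow _ hp0.le]
  refine (setLIntegral_enorm_rpow_le_morrey_of_ae_le_add hp1.le hCT.le hK hCV.le hN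
    (by positivity) (hsplit.mono fun x hx => hx.2) hnear hball).trans_eq ?_
  rw [← Real.rpow_mul (by positivity), inv_mul_cancel₀ hp0.ne', Real.rpow_one,
    Real.mul_rpow zero_le_two hR.le]
  congr 1
  ring

/-- Theorem 7.4: an `L^p`-bounded integral operator whose kernel has
Calderón–Zygmund size `|S(x,y)| ≤ C_S d(x,y)^{-m}` is bounded on the Morrey
space `M_{p,λ}`, under the Euclidean volume upper bound `μ(B(x,R)) ≤ C_V R^m`. -/
theorem CZ_operator_Morrey_bounded
    {X : Type*} [MetricSpace X] [MeasurableSpace X] [BorelSpace X]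
    (μ : Measure X) (m p lam C_V C_S C_T : ℝ)
    (hm : 0 < m) (hp1 : 1 < p) (hlam0 : 0 ≤ lam) (hlamm : lam < m)
    (hCV : 0 < C_V) (hCS : 0 < C_S) (hCT : 0 < C_T)
    (hvol : ∀ (x : X) (R : ℝ), 0 < R → μ (Metric.ball x R) ≤ ENNReal.ofReal (C_V * R ^ m))
    (S : X → X → ℝ)
    (hSmeas : Measurable fun w : X × X => S w.1 w.2)
    (hSbd : ∀ x y : X, x ≠ y → |S x y| ≤ C_S * dist x y ^ (-m))
    (hTae : ∀ f : X → ℝ, MemLp f (ENNReal.ofReal p) μ →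
      ∀ᵐ x ∂μ, Integrable (fun y => S x y * f y) μ)
    (hTbd : ∀ f : X → ℝ, MemLp f (ENNReal.ofReal p) μ →
      eLpNorm (fun x => ∫ y, S x y * f y ∂μ) (ENNReal.ofReal p) μ ≤
        ENNReal.ofReal C_T * eLpNorm f (ENNReal.ofReal p) μ) :
    ∃ C > (0 : ℝ), ∀ f : X → ℝ, Measurable f → ∀ N : ℝ, 0 ≤ N →
      (∀ (x : X) (R : ℝ), 0 < R →
        ∫⁻ y in Metric.ball x R, ENNReal.ofReal (|f y| ^ p) ∂μ ≤
          ENNReal.ofReal (N ^ p * R ^ lam)) →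
      ∀ (x₀ : X) (R : ℝ), 0 < R →
        (∀ᵐ x ∂μ.restrict (Metric.ball x₀ R), Integrable (fun y => S x y * f y) μ) ∧
        ∫⁻ x in Metric.ball x₀ R, ENNReal.ofReal (|∫ y, S x y * f y ∂μ| ^ p) ∂μ ≤
          ENNReal.ofReal (C ^ p * N ^ p * R ^ lam) :=
  CZ_operator_Morrey_bounded_general μ m p lam C_V C_S C_T hm hp1 hlamm hCV hCS hCT hvol S hSmeas
    hSbd hTae hTbd
end

section
/- Let (X,d) be a metric space endowed with a Borel measure μ, let m > 0, λ ∈ [0,m), p ∈ [1,∞) and C₁, C₂ > 0. Let G : (0,∞) × X × X → ℝ be measurable with 0 ≤ G(t,x,y) ≤ C₁ · t^{−m/2} · exp(−C₂ · d(x,y)²/t) for all t > 0 and x, y ∈ X, and with ∫_X G(t,x,y) dμ(y) ≤ 1 for all t > 0 and x ∈ X. Let u₀ : X → ℝ be measurable and N ≥ 0 with ∫_{B(x,R)} |u₀|^p dμ ≤ N^p R^λ for all x ∈ X and R > 0. Then there exists C > 0, depending only on C₁, C₂, m, λ and p, such that for every t > 0 and every x ∈ X: ∫_X G(t,x,y)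 |u₀(y)| dμ(y) ≤ C · t^{−(m−λ)/(2p)} · N. -/
/-!
Cut `X` into the shells `k√t ≤ d(x, ·) < (k + 1)√t`. On the `k`-th shell the Gaussian bound gives
`G(t, x, ·) ≤ C₁ t^{-m/2} e^{-C₂ k²}`, while the Morrey bound on the ball of radius `(k + 1)√t`
gives `∫ |u₀|^p ≤ N^p (k + 1)^λ t^{λ/2}`. Summing over `k`,
`∫ G |u₀|^p ≤ C₁ S N^p t^{-(m-λ)/2}` with `S = ∑ₖ (k + 1)^λ e^{-C₂ k²} < ∞`. As `G(t, x, ·) μ` has mass at most `1`, Jensen's inequality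
gives `∫ G |u₀| ≤ (∫ G |u₀|^p)^{1/p}`.
-/

open MeasureTheory Metric Set

open scoped ENNReal

theorem ENNReal.lintegral_le_lintegral_rpow_rpow_one_div {α : Type*} [MeasurableSpace α]
    {ν : Measure α} (hν : ν univ ≤ 1) {p : ℝ} (hp : 1 ≤ p) {f : α → ℝ≥0∞}
    (hf : AEMeasurable f ν) : ∫⁻ a, f a ∂ν ≤ (∫⁻ a, f a ^ p ∂ν) ^ (1 / p) := by
  have h := eLpNorm'_le_eLpNorm'_mul_rpow_measure_univ one_pos hp hf.aestronglyMeasurable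
  have hν' : ν univ ^ (1 / 1 - 1 / p) ≤ 1 :=
    ENNReal.rpow_le_one hν (by rw [div_one, sub_nonneg]; exact div_le_one_of_le₀ hp (by linarith))
  simpa [eLpNorm'] using h.trans (mul_le_of_le_one_right' hν')

theorem lintegral_mul_le_lintegral_mul_rpow_rpow_one_div {α : Type*} [MeasurableSpace α]
    {μ : Measure α} {g f : α → ℝ≥0∞} (hg : Measurable g) (hg_le : ∫⁻ a, g a ∂μ ≤ 1)
    (hf : Measurable f) {p : ℝ} (hp : 1 ≤ p) :
    ∫⁻ a, g a * f a ∂μ ≤ (∫⁻ a, g a * f a ^ p ∂μ) ^ (1 / p) := by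
  have hν : μ.withDensity g univ ≤ 1 := by
    rwa [withDensity_apply _ MeasurableSet.univ, Measure.restrict_univ]
  have h := ENNReal.lintegral_le_lintegral_rpow_rpow_one_div hν hp hf.aemeasurable
  rwa [lintegral_withDensity_eq_lintegral_mul _ hg hf,
    lintegral_withDensity_eq_lintegral_mul _ hg (hf.pow_const p)] at h

theorem Real.summable_add_one_rpow_mul_exp_neg_mul_sq (lam : ℝ) {c : ℝ} (hc : 0 < c) :
    Summable fun k : ℕ => ((k : ℝ) + 1) ^ lam * Real.exp (-c * (k : ℝ) ^ 2) := by
  set n := ⌈lam⌉₊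
  have hgeom : Summable fun k : ℕ => ((k : ℝ) + 1) ^ n * Real.exp (-c * k) := by
    refine (((summable_nat_add_iff 1).2 (Real.summable_pow_mul_exp_neg_nat_mul n hc)).mul_left
      (Real.exp c)).congr fun k => ?_
    push_cast
    rw [mul_left_comm, ← Real.exp_add]
    ring_nf
  refine hgeom.of_nonneg_of_le (fun k => by positivity) fun k => ?_
  gcongr ?_ * ?_
  · calc ((k : ℝ) + 1) ^ lam ≤ ((k : ℝ) + 1) ^ (n : ℝ) :=
          Real.rpow_le_rpow_of_exponent_le (by linarith [k.cast_nonneg (α := ℝ)]) (Nat.le_ceil lam)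
      _ = _ := Real.rpow_natCast _ _
  · have : (k : ℝ) ≤ (k : ℝ) ^ 2 := by exact_mod_cast Nat.le_self_pow two_ne_zero k
    exact Real.exp_le_exp.2 (by nlinarith)

section Shells

variable {X : Type*} [PseudoMetricSpace X]

theorem iUnion_ball_diff_ball_nat_mul (x : X) {r : ℝ} (hr : 0 < r) :
    ⋃ k : ℕ, ball x ((k + 1) * r) \ ball x (k * r) = univ := by
  refine eq_univ_of_forall fun y => mem_iUnion.2 ⟨⌊dist y x / r⌋₊, ?_, ?_⟩
  · rw [mem_ball, ← div_lt_iff₀ hr]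
    exact Nat.lt_floor_add_one _
  · rw [mem_ball, not_lt, ← le_div_iff₀ hr]
    exact Nat.floor_le (by positivity)

variable [MeasurableSpace X] {μ : Measure X}

theorem lintegral_le_tsum_ball_diff_ball (f : X → ℝ≥0∞) (x : X) {r : ℝ} (hr : 0 < r) :
    ∫⁻ y, f y ∂μ ≤ ∑' k : ℕ, ∫⁻ y in ball x ((k + 1) * r) \ ball x (k * r), f y ∂μ := by
  calc ∫⁻ y, f y ∂μ
      = ∫⁻ y in ⋃ k : ℕ, ball x ((k + 1) * r) \ ball x (k * r), f y ∂μ := by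
        rw [iUnion_ball_diff_ball_nat_mul x hr, setLIntegral_univ]
    _ ≤ _ := lintegral_iUnion_le _ _

theorem setLIntegral_ball_diff_ball_gaussian_mul_le {f g : X → ℝ≥0∞} (hf : Measurable f)
    {x : X} {A c M lam t : ℝ} (hA : 0 ≤ A) (hc : 0 ≤ c) (ht : 0 < t)
    (hg : ∀ y, g y ≤ ENNReal.ofReal (A * Real.exp (-c * dist x y ^ 2 / t)))
    (hmor : ∀ R > 0, ∫⁻ y in ball x R, f y ∂μ ≤ ENNReal.ofReal (M * R ^ lam)) (k : ℕ) :
    ∫⁻ y in ball x ((k + 1) * √t) \ ball x (k * √t), g y * f y ∂μ ≤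
      ENNReal.ofReal (A * Real.exp (-c * k ^ 2)) *
        ENNReal.ofReal (M * ((k + 1) * √t) ^ lam) := by
  have hg_shell : ∀ y ∈ ball x ((k + 1) * √t) \ ball x (k * √t),
      g y ≤ ENNReal.ofReal (A * Real.exp (-c * k ^ 2)) := by
    rintro y ⟨-, hy⟩
    rw [mem_ball, not_lt, dist_comm] at hy
    have hk : (k : ℝ) ^ 2 * t ≤ dist x y ^ 2 := by
      calc (k : ℝ) ^ 2 * t = (k * √t) ^ 2 := by rw [mul_pow, Real.sq_sqrt ht.le]
        _ ≤ dist x y ^ 2 := by gcongr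
    refine (hg y).trans (ENNReal.ofReal_le_ofReal ?_)
    gcongr
    rw [neg_mul, neg_mul, neg_div, neg_le_neg_iff, le_div_iff₀ ht, mul_assoc]
    gcongr
  calc ∫⁻ y in ball x ((k + 1) * √t) \ ball x (k * √t), g y * f y ∂μ
      ≤ ∫⁻ y in ball x ((k + 1) * √t) \ ball x (k * √t),
          ENNReal.ofReal (A * Real.exp (-c * k ^ 2)) * f y ∂μ :=
        setLIntegral_mono (hf.const_mul _) fun y hy => mul_le_mul_left (hg_shell y hy) _
    _ ≤ ENNReal.ofReal (A * Real.exp (-c * k ^ 2)) * ∫⁻ y in ball x ((k + 1) * √t), f y ∂μ := by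
        rw [lintegral_const_mul _ hf]
        gcongr
        exact sdiff_subset
    _ ≤ _ := by
        gcongr
        exact hmor _ (by positivity)

theorem lintegral_gaussian_mul_le_of_morrey {f g : X → ℝ≥0∞} (hf : Measurable f)
    {x : X} {A c M lam t : ℝ} (hA : 0 ≤ A) (hc : 0 < c) (hM : 0 ≤ M) (ht : 0 < t)
    (hg : ∀ y, g y ≤ ENNReal.ofReal (A * Real.exp (-c * dist x y ^ 2 / t)))
    (hmor : ∀ R > 0, ∫⁻ y in ball x R, f y ∂μ ≤ ENNReal.ofReal (M * R ^ lam)) :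
    ∫⁻ y, g y * f y ∂μ ≤ ENNReal.ofReal
      (A * M * t ^ (lam / 2) * ∑' k : ℕ, ((k : ℝ) + 1) ^ lam * Real.exp (-c * (k : ℝ) ^ 2)) := by
  have hterm : ∀ k : ℕ, ENNReal.ofReal (A * Real.exp (-c * k ^ 2)) *
      ENNReal.ofReal (M * ((k + 1) * √t) ^ lam) = ENNReal.ofReal
        (A * M * t ^ (lam / 2) * (((k : ℝ) + 1) ^ lam * Real.exp (-c * (k : ℝ) ^ 2))) := by
    intro k
    rw [← ENNReal.ofReal_mul (by positivity), Real.mul_rpow (by positivity) (Real.sqrt_nonneg t),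
      Real.sqrt_eq_rpow, ← Real.rpow_mul ht.le]
    ring_nf
  calc ∫⁻ y, g y * f y ∂μ
      ≤ ∑' k : ℕ, ∫⁻ y in ball x ((k + 1) * √t) \ ball x (k * √t), g y * f y ∂μ :=
        lintegral_le_tsum_ball_diff_ball _ x (Real.sqrt_pos.2 ht)
    _ ≤ ∑' k : ℕ, ENNReal.ofReal
          (A * M * t ^ (lam / 2) * (((k : ℝ) + 1) ^ lam * Real.exp (-c * (k : ℝ) ^ 2))) :=
        ENNReal.tsum_le_tsum fun k => (hterm k ▸
          setLIntegral_ball_diff_ball_gaussian_mul_le hf hA hc.le ht hg hmor k)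
    _ = _ := by
        rw [← ENNReal.ofReal_tsum_of_nonneg (fun k => by positivity)
          ((Real.summable_add_one_rpow_mul_exp_neg_mul_sq lam hc).mul_left _), tsum_mul_left]

end Shells

theorem Real.mul_rpow_mul_rpow_mul_rpow_mul_rpow_one_div {a b N t p : ℝ} (hab : 0 ≤ a * b)
    (hN : 0 ≤ N) (ht : 0 < t) (hp : 0 < p) (s₁ s₂ : ℝ) :
    (a * t ^ s₁ * N ^ p * t ^ s₂ * b) ^ (1 / p) = (a * b) ^ (1 / p) * t ^ ((s₁ + s₂) / p) * N := by
  have h : a * t ^ s₁ * N ^ p * t ^ s₂ * b = a * b * t ^ (s₁ + s₂) * N ^ p := by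
    rw [Real.rpow_add ht]
    ring
  rw [h, Real.mul_rpow (by positivity) (by positivity), Real.mul_rpow hab (by positivity),
    ← Real.rpow_mul hN, mul_one_div_cancel hp.ne', Real.rpow_one, ← Real.rpow_mul ht.le,
    mul_one_div]

theorem dispersive_Linfty_ricci_flat_general
    {X : Type*} [MetricSpace X] [MeasurableSpace X]
    (μ : Measure X) (m lam p C₁ C₂ N : ℝ)
    (hp : 1 ≤ p)
    (hC₁ : 0 < C₁) (hC₂ : 0 < C₂)
    (G : ℝ → X → X → ℝ)
    (hGmeas : Measurable fun w : ℝ × X × X => G w.1 w.2.1 w.2.2)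
    (hG0 : ∀ t > (0 : ℝ), ∀ x y : X, 0 ≤ G t x y)
    (hGbd : ∀ t > (0 : ℝ), ∀ x y : X, G t x y ≤
      C₁ * t ^ (-(m / 2)) * Real.exp (-C₂ * dist x y ^ 2 / t))
    (hGmarkov : ∀ t > (0 : ℝ), ∀ x : X, ∫⁻ y, ENNReal.ofReal (G t x y) ∂μ ≤ 1)
    (u₀ : X → ℝ) (hu₀ : Measurable u₀) (hN : 0 ≤ N)
    (hmor : ∀ (x : X) (R : ℝ), 0 < R →
      ∫⁻ y in Metric.ball x R, ENNReal.ofReal (|u₀ y| ^ p) ∂μ ≤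
        ENNReal.ofReal (N ^ p * R ^ lam)) :
    ∃ C > (0 : ℝ), ∀ t > (0 : ℝ), ∀ x : X,
      ∫⁻ y, ENNReal.ofReal (G t x y * |u₀ y|) ∂μ ≤
        ENNReal.ofReal (C * t ^ (-((m - lam) / (2 * p))) * N) := by
  set S := ∑' k : ℕ, ((k : ℝ) + 1) ^ lam * Real.exp (-C₂ * (k : ℝ) ^ 2)
  have hS : 0 < S := (Real.summable_add_one_rpow_mul_exp_neg_mul_sq lam hC₂).tsum_pos
    (fun k => by positivity) 0 (by positivity)
  refine ⟨(C₁ * S) ^ (1 / p), by positivity, fun t ht x => ?_⟩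
  have hp0 : 0 < p := one_pos.trans_le hp
  have hGx : Measurable fun y => ENNReal.ofReal (G t x y) :=
    (hGmeas.comp (measurable_const.prodMk (measurable_const.prodMk measurable_id))).ennreal_ofReal
  have hu : Measurable fun y => ENNReal.ofReal |u₀ y| := hu₀.abs.ennreal_ofReal
  have hgauss := lintegral_gaussian_mul_le_of_morrey (hu₀.abs.pow_const p).ennreal_ofReal
    (by positivity) hC₂ (Real.rpow_nonneg hN p) ht
    (fun y => ENNReal.ofReal_le_ofReal (hGbd t ht x y)) (hmor x)
  calc ∫⁻ y, ENNReal.ofReal (G t x y * |u₀ y|) ∂μ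
      = ∫⁻ y, ENNReal.ofReal (G t x y) * ENNReal.ofReal |u₀ y| ∂μ := by
        simp_rw [ENNReal.ofReal_mul (hG0 t ht x _)]
    _ ≤ (∫⁻ y, ENNReal.ofReal (G t x y) * ENNReal.ofReal |u₀ y| ^ p ∂μ) ^ (1 / p) :=
        lintegral_mul_le_lintegral_mul_rpow_rpow_one_div hGx (hGmarkov t ht x) hu hp
    _ ≤ ENNReal.ofReal (C₁ * t ^ (-(m / 2)) * N ^ p * t ^ (lam / 2) * S) ^ (1 / p) := by
        simp_rw [ENNReal.ofReal_rpow_of_nonneg (abs_nonneg _) hp0.le]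
        exact ENNReal.rpow_le_rpow hgauss (by positivity)
    _ = ENNReal.ofReal ((C₁ * S) ^ (1 / p) * t ^ (-((m - lam) / (2 * p))) * N) := by
        rw [ENNReal.ofReal_rpow_of_nonneg (by positivity) (by positivity),
          Real.mul_rpow_mul_rpow_mul_rpow_mul_rpow_one_div (by positivity) hN ht hp0]
        ring_nf

/-- Abstract form of the dispersive estimate `e^{tΔ_g} : M_{p,λ} → L^∞` with
decay `t^{-(m-λ)/(2p)}` on Ricci-flat manifolds (Theorem 7.1): a Markovian
kernel with global Gaussian bound `C₁ t^{-m/2} e^{-C₂ d(x,y)²/t}` applied to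
Morrey data. -/
theorem dispersive_Linfty_ricci_flat
    {X : Type*} [MetricSpace X] [MeasurableSpace X] [BorelSpace X]
    (μ : Measure X) (m lam p C₁ C₂ N : ℝ)
    (hm : 0 < m) (hlam0 : 0 ≤ lam) (hlamm : lam < m) (hp : 1 ≤ p)
    (hC₁ : 0 < C₁) (hC₂ : 0 < C₂)
    (G : ℝ → X → X → ℝ)
    (hGmeas : Measurable fun w : ℝ × X × X => G w.1 w.2.1 w.2.2)
    (hG0 : ∀ t > (0 : ℝ), ∀ x y : X, 0 ≤ G t x y)
    (hGbd : ∀ t > (0 : ℝ), ∀ x y : X, G t x y ≤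
      C₁ * t ^ (-(m / 2)) * Real.exp (-C₂ * dist x y ^ 2 / t))
    (hGmarkov : ∀ t > (0 : ℝ), ∀ x : X, ∫⁻ y, ENNReal.ofReal (G t x y) ∂μ ≤ 1)
    (u₀ : X → ℝ) (hu₀ : Measurable u₀) (hN : 0 ≤ N)
    (hmor : ∀ (x : X) (R : ℝ), 0 < R →
      ∫⁻ y in Metric.ball x R, ENNReal.ofReal (|u₀ y| ^ p) ∂μ ≤
        ENNReal.ofReal (N ^ p * R ^ lam)) :
    ∃ C > (0 : ℝ), ∀ t > (0 : ℝ), ∀ x : X,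
      ∫⁻ y, ENNReal.ofReal (G t x y * |u₀ y|) ∂μ ≤
        ENNReal.ofReal (C * t ^ (-((m - lam) / (2 * p))) * N) :=
  dispersive_Linfty_ricci_flat_general μ m lam p C₁ C₂ N hp hC₁ hC₂ G hGmeas hG0 hGbd hGmarkov u₀
    hu₀ hN hmor
end

section
/- Let λ ≥ 0, a ≥ 0 and c ∈ (0, 1/4), and set γ = a·(1/4 − c)^{−1}. Then there exists a constant C > 0, depending only on λ, a and c, such that for every t > 0: ∫₀^∞ (r^{λ+1}/t) · exp( −r²/(4t) + a·r ) dr ≤ C · t^{λ/2} · e^{a·γ·t}. -/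
/-!
Completing the square gives `-r²/(4t) + a r ≤ a γ t - (c/t) r²` for all `r`, since
`1/4 - c > 0`. This pulls the drift out of the integral as the factor `e^{aγt}` and leaves the
Gaussian moment `∫₀^∞ r^{λ+1} e^{-(c/t) r²} dr = ½ Γ((λ+2)/2) (t/c)^{(λ+2)/2}`, so the estimate
holds with `C = ½ c^{-(λ+2)/2} Γ((λ+2)/2)`.
-/

open Real Set MeasureTheory

theorem neg_sq_div_add_mul_le (a r : ℝ) {b t : ℝ} (hb : 0 < b) (ht : 0 < t) :
    -r ^ 2 / (4 * t) + a * r ≤ a * (a * b⁻¹) * t - (1 / 4 - b) / t * r ^ 2 := by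
  have key : a * (a * b⁻¹) * t - (1 / 4 - b) / t * r ^ 2 - (-r ^ 2 / (4 * t) + a * r) =
      ((2 * b * r - a * t) ^ 2 + 3 * a ^ 2 * t ^ 2) / (4 * b * t) := by
    field_simp
    ring
  have : 0 ≤ ((2 * b * r - a * t) ^ 2 + 3 * a ^ 2 * t ^ 2) / (4 * b * t) := by positivity
  linarith

theorem rpow_div_mul_exp_drift_le (s a : ℝ) {c t r : ℝ} (hc4 : c < 1 / 4) (ht : 0 < t)
    (hr : 0 ≤ r) :
    r ^ s / t * exp (-r ^ 2 / (4 * t) + a * r) ≤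
      exp (a * (a * (1 / 4 - c)⁻¹) * t) / t * (r ^ s * exp (-(c / t) * r ^ 2)) :=
  calc r ^ s / t * exp (-r ^ 2 / (4 * t) + a * r)
      ≤ r ^ s / t * exp (a * (a * (1 / 4 - c)⁻¹) * t - c / t * r ^ 2) := by
        refine mul_le_mul_of_nonneg_left (exp_le_exp.2 ?_) (by positivity)
        simpa only [sub_sub_cancel] using neg_sq_div_add_mul_le a r (sub_pos.2 hc4) ht
    _ = exp (a * (a * (1 / 4 - c)⁻¹) * t) / t * (r ^ s * exp (-(c / t) * r ^ 2)) := by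
        rw [sub_eq_add_neg, exp_add, neg_mul]
        ring

theorem lintegral_rpow_mul_exp_neg_mul_sq_Ioi {b s : ℝ} (hb : 0 < b) (hs : -1 < s) :
    ∫⁻ r in Ioi (0 : ℝ), ENNReal.ofReal (r ^ s * exp (-b * r ^ 2)) =
      ENNReal.ofReal (b ^ (-(s + 1) / 2) * (1 / 2) * Gamma ((s + 1) / 2)) := by
  rw [← ofReal_integral_eq_lintegral_ofReal (integrableOn_rpow_mul_exp_neg_mul_sq hb hs)]
  · simp_rw [← rpow_two]
    rw [integral_rpow_mul_exp_neg_mul_rpow two_pos hs hb]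
  · filter_upwards [ae_restrict_mem measurableSet_Ioi] with r hr
    exact mul_nonneg (rpow_nonneg (le_of_lt hr) _) (exp_pos _).le

theorem div_rpow_neg_add_two_div_two_div {c t : ℝ} (hc : 0 < c) (ht : 0 < t) (x : ℝ) :
    (c / t) ^ (-(x + 2) / 2) / t = c ^ (-(x + 2) / 2) * t ^ (x / 2) := by
  have hhalf : t ^ (x / 2) = t ^ ((x + 2) / 2) / t := by
    rw [← rpow_sub_one ht.ne']
    ring_nf
  rw [div_rpow hc.le ht.le, neg_div, rpow_neg ht.le, hhalf]
  field_simp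

theorem gaussian_drift_moment_general
    (lam a c : ℝ) (hlam : 0 ≤ lam) (hc0 : 0 < c) (hc4 : c < 1 / 4) :
    ∃ C > (0 : ℝ), ∀ t > (0 : ℝ),
      ∫⁻ r in Set.Ioi (0 : ℝ),
          ENNReal.ofReal (r ^ (lam + 1) / t * Real.exp (-r ^ 2 / (4 * t) + a * r)) ≤
        ENNReal.ofReal (C * t ^ (lam / 2) * Real.exp (a * (a * (1 / 4 - c)⁻¹) * t)) := by
  have hGamma : 0 < Gamma ((lam + 2) / 2) := Gamma_pos_of_pos (by linarith)
  refine ⟨c ^ (-(lam + 2) / 2) * (1 / 2) * Gamma ((lam + 2) / 2), by positivity, fun t ht => ?_⟩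
  set E := exp (a * (a * (1 / 4 - c)⁻¹) * t)
  calc _ ≤ ∫⁻ r in Ioi (0 : ℝ),
        ENNReal.ofReal (E / t) * ENNReal.ofReal (r ^ (lam + 1) * exp (-(c / t) * r ^ 2)) := by
        refine setLIntegral_mono (by fun_prop) fun r hr => ?_
        rw [← ENNReal.ofReal_mul (by positivity)]
        exact ENNReal.ofReal_le_ofReal (rpow_div_mul_exp_drift_le _ a hc4 ht (le_of_lt hr))
    _ = ENNReal.ofReal (E / t) *
        ENNReal.ofReal ((c / t) ^ (-(lam + 2) / 2) * (1 / 2) * Gamma ((lam + 2) / 2)) := by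
        rw [lintegral_const_mul' _ _ ENNReal.ofReal_ne_top,
          lintegral_rpow_mul_exp_neg_mul_sq_Ioi (div_pos hc0 ht) (by linarith), add_assoc,
          one_add_one_eq_two]
    _ = _ := by
        rw [← ENNReal.ofReal_mul (by positivity)]
        congr 1
        linear_combination (1 / 2 * Gamma ((lam + 2) / 2) * E) * div_rpow_neg_add_two_div_two_div hc0 ht lam

/-- The Gaussian-with-linear-drift moment estimate
`∫₀^∞ (r^{λ+1}/t) e^{-r²/(4t) + ar} dr ≤ C t^{λ/2} e^{aγt}` with
`γ = a(1/4 - c)⁻¹`, used in the dispersive heat semigroup bounds. -/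
theorem gaussian_drift_moment
    (lam a c : ℝ) (hlam : 0 ≤ lam) (ha : 0 ≤ a) (hc0 : 0 < c) (hc4 : c < 1 / 4) :
    ∃ C > (0 : ℝ), ∀ t > (0 : ℝ),
      ∫⁻ r in Set.Ioi (0 : ℝ),
          ENNReal.ofReal (r ^ (lam + 1) / t * Real.exp (-r ^ 2 / (4 * t) + a * r)) ≤
        ENNReal.ofReal (C * t ^ (lam / 2) * Real.exp (a * (a * (1 / 4 - c)⁻¹) * t)) :=
  gaussian_drift_moment_general lam a c hlam hc0 hc4
end

section
/- Let (X,d) be a metric space endowed with a Borel measure μ, let p ∈ [1,∞), λ ≥ 0 and α > λ. Let f : X → ℝ be measurable and N ≥ 0 with ∫_{B(x,R)} |f|^p dμ ≤ N^p · R^λ for every x ∈ X and R > 0. Then there exists a constant C > 0, depending only on α and λ, such that for every x ∈ X and every ρ > 0: ∫_{X ∖ B(x,ρ)} d(x,y)^{−α} · |f(y)|^p dμ(y) ≤ C · N^p · ρ^{λ−α}. -/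
open MeasureTheory

/-- Tail estimate against Morrey data:
if `∫_{B(x,R)} |f|^p dμ ≤ N^p R^λ` for all `x, R` and `α > λ`, then
`∫_{X∖B(x,ρ)} d(x,y)^{-α} |f(y)|^p dμ(y) ≤ C N^p ρ^{λ-α}`. -/
theorem tail_morrey_estimate
    {X : Type*} [MetricSpace X] [MeasurableSpace X] [BorelSpace X]
    (μ : Measure X) (p lam α N : ℝ)
    (hp : 1 ≤ p) (hlam : 0 ≤ lam) (hα : lam < α)
    (f : X → ℝ) (hf : Measurable f) (hN : 0 ≤ N)
    (hmor : ∀ (x : X) (R : ℝ), 0 < R →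
      ∫⁻ y in Metric.ball x R, ENNReal.ofReal (|f y| ^ p) ∂μ ≤
        ENNReal.ofReal (N ^ p * R ^ lam)) :
    ∃ C > (0 : ℝ), ∀ (x : X) (ρ : ℝ), 0 < ρ →
      ∫⁻ y in (Metric.ball x ρ)ᶜ, ENNReal.ofReal (dist x y ^ (-α) * |f y| ^ p) ∂μ ≤
        ENNReal.ofReal (C * N ^ p * ρ ^ (lam - α)) := by
  set r : ℝ := (2 : ℝ) ^ (lam - α) with hr
  have hr0 : 0 < r := Real.rpow_pos_of_pos two_pos _
  have hr1 : r < 1 := Real.rpow_lt_one_of_one_lt_of_neg one_lt_two (by linarith)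
  refine ⟨2 ^ lam * (1 - r)⁻¹,
    mul_pos (Real.rpow_pos_of_pos two_pos _) (inv_pos.2 (by linarith)), ?_⟩
  intro x ρ hρ
  set A : ℕ → Set X := fun k =>
    Metric.ball x (2 ^ (k + 1) * ρ) \ Metric.ball x (2 ^ k * ρ) with hA
  -- the complement of the ball is covered by the dyadic annuli
  have hsub : (Metric.ball x ρ)ᶜ ⊆ ⋃ k, A k := by
    intro y hy
    have hd : ρ ≤ dist x y := by
      rw [dist_comm]
      simpa [Metric.mem_ball, not_lt] using hy
    have hex : ∃ n : ℕ, dist x y < 2 ^ n * ρ := by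
      obtain ⟨n, hn⟩ := pow_unbounded_of_one_lt (dist x y / ρ) one_lt_two
      rw [div_lt_iff₀ hρ] at hn
      exact ⟨n, by linarith⟩
    classical
    set n := Nat.find hex with hn
    have hspec : dist x y < 2 ^ n * ρ := Nat.find_spec hex
    have hnz : n ≠ 0 := by
      intro h0
      rw [h0] at hspec
      simp only [pow_zero, one_mul] at hspec
      linarith
    obtain ⟨m, hm⟩ := Nat.exists_eq_succ_of_ne_zero hnz
    have hmin : ¬ dist x y < 2 ^ m * ρ := Nat.find_min hex (by omega)
    refine Set.mem_iUnion.2 ⟨m, ?_, ?_⟩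
    · rw [Metric.mem_ball, dist_comm]
      rw [hm] at hspec; exact hspec
    · rw [Metric.mem_ball, dist_comm]
      exact hmin
  have hfmeas : Measurable fun y => ENNReal.ofReal (|f y| ^ p) :=
    (hf.abs.pow measurable_const).ennreal_ofReal
  -- the key real identity
  have key : ∀ k : ℕ, ((2:ℝ) ^ k * ρ) ^ (-α) * (N ^ p * ((2:ℝ) ^ (k + 1) * ρ) ^ lam) =
      N ^ p * 2 ^ lam * ρ ^ (lam - α) * r ^ k := by
    intro k
    have h1 : ((2:ℝ) ^ k * ρ) ^ (-α) = 2 ^ ((k : ℝ) * (-α)) * ρ ^ (-α) := by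
      rw [Real.mul_rpow (by positivity) hρ.le, ← Real.rpow_natCast (2:ℝ) k,
        ← Real.rpow_mul (by norm_num)]
    have h2 : ((2:ℝ) ^ (k + 1) * ρ) ^ lam = 2 ^ (((k : ℝ) + 1) * lam) * ρ ^ lam := by
      rw [Real.mul_rpow (by positivity) hρ.le, ← Real.rpow_natCast (2:ℝ) (k + 1),
        ← Real.rpow_mul (by norm_num)]
      push_cast
      ring_nf
    have h3 : r ^ k = (2:ℝ) ^ ((lam - α) * (k : ℝ)) := by
      rw [hr, ← Real.rpow_natCast ((2:ℝ) ^ (lam - α)) k, ← Real.rpow_mul (by norm_num)]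
    have h4 : ρ ^ (lam - α) = ρ ^ lam * ρ ^ (-α) := by
      rw [← Real.rpow_add hρ, sub_eq_add_neg]
    rw [h1, h2, h3, h4,
      show ((k : ℝ) + 1) * lam = lam + (k : ℝ) * lam by ring, Real.rpow_add two_pos,
      show (lam - α) * (k : ℝ) = (k : ℝ) * (-α) + (k : ℝ) * lam by ring,
      Real.rpow_add two_pos]
    ring
  -- term-wise bound over each annulus
  have hterm : ∀ k : ℕ,
      ∫⁻ y in A k, ENNReal.ofReal (dist x y ^ (-α) * |f y| ^ p) ∂μ ≤
        ENNReal.ofReal (N ^ p * 2 ^ lam * ρ ^ (lam - α) * r ^ k) := by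
    intro k
    have hRk : (0:ℝ) < 2 ^ k * ρ := by positivity
    have hRk1 : (0:ℝ) < 2 ^ (k + 1) * ρ := by positivity
    have step1 : ∫⁻ y in A k, ENNReal.ofReal (dist x y ^ (-α) * |f y| ^ p) ∂μ ≤
        ∫⁻ y in A k, ENNReal.ofReal (((2:ℝ) ^ k * ρ) ^ (-α)) *
          ENNReal.ofReal (|f y| ^ p) ∂μ := by
      refine setLIntegral_mono (hfmeas.const_mul _) ?_
      intro y hy
      have hge : (2:ℝ) ^ k * ρ ≤ dist x y := by
        have := hy.2
        rw [Metric.mem_ball, dist_comm, not_lt] at this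
        exact this
      have hpow : dist x y ^ (-α) ≤ ((2:ℝ) ^ k * ρ) ^ (-α) :=
        Real.rpow_le_rpow_of_nonpos hRk hge (by linarith)
      rw [← ENNReal.ofReal_mul (by positivity)]
      exact ENNReal.ofReal_le_ofReal
        (mul_le_mul_of_nonneg_right hpow (Real.rpow_nonneg (abs_nonneg _) _))
    have step2 : ∫⁻ y in A k, ENNReal.ofReal (((2:ℝ) ^ k * ρ) ^ (-α)) *
          ENNReal.ofReal (|f y| ^ p) ∂μ =
        ENNReal.ofReal (((2:ℝ) ^ k * ρ) ^ (-α)) *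
          ∫⁻ y in A k, ENNReal.ofReal (|f y| ^ p) ∂μ :=
      lintegral_const_mul _ hfmeas
    have step3 : ∫⁻ y in A k, ENNReal.ofReal (|f y| ^ p) ∂μ ≤
        ENNReal.ofReal (N ^ p * ((2:ℝ) ^ (k + 1) * ρ) ^ lam) := by
      refine le_trans (lintegral_mono_set ?_) (hmor x _ hRk1)
      exact Set.diff_subset
    calc ∫⁻ y in A k, ENNReal.ofReal (dist x y ^ (-α) * |f y| ^ p) ∂μ
        ≤ ENNReal.ofReal (((2:ℝ) ^ k * ρ) ^ (-α)) *
            ∫⁻ y in A k, ENNReal.ofReal (|f y| ^ p) ∂μ := step1.trans_eq step2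
      _ ≤ ENNReal.ofReal (((2:ℝ) ^ k * ρ) ^ (-α)) *
            ENNReal.ofReal (N ^ p * ((2:ℝ) ^ (k + 1) * ρ) ^ lam) :=
          mul_le_mul_right step3 _
      _ = ENNReal.ofReal (N ^ p * 2 ^ lam * ρ ^ (lam - α) * r ^ k) := by
          rw [← ENNReal.ofReal_mul (by positivity), key k]
  -- summing the geometric series
  have hsum : ∑' k : ℕ, ENNReal.ofReal (N ^ p * 2 ^ lam * ρ ^ (lam - α) * r ^ k) ≤
      ENNReal.ofReal ((2 ^ lam * (1 - r)⁻¹) * N ^ p * ρ ^ (lam - α)) := by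
    have hc0 : (0:ℝ) ≤ N ^ p * 2 ^ lam * ρ ^ (lam - α) := by
      have : (0:ℝ) ≤ N ^ p := Real.rpow_nonneg hN p
      positivity
    have heq : ∀ k : ℕ, ENNReal.ofReal (N ^ p * 2 ^ lam * ρ ^ (lam - α) * r ^ k) =
        ENNReal.ofReal (N ^ p * 2 ^ lam * ρ ^ (lam - α)) * (ENNReal.ofReal r) ^ k := by
      intro k
      rw [ENNReal.ofReal_mul hc0, ENNReal.ofReal_pow hr0.le]
    rw [tsum_congr heq, ENNReal.tsum_mul_left, ENNReal.tsum_geometric]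
    have hinv : (1 - ENNReal.ofReal r)⁻¹ = ENNReal.ofReal ((1 - r)⁻¹) := by
      rw [← ENNReal.ofReal_one, ← ENNReal.ofReal_sub _ hr0.le,
        ← ENNReal.ofReal_inv_of_pos (by linarith)]
    rw [hinv, ← ENNReal.ofReal_mul hc0]
    exact ENNReal.ofReal_le_ofReal (le_of_eq (by ring))
  calc ∫⁻ y in (Metric.ball x ρ)ᶜ, ENNReal.ofReal (dist x y ^ (-α) * |f y| ^ p) ∂μ
      ≤ ∫⁻ y in ⋃ k, A k, ENNReal.ofReal (dist x y ^ (-α) * |f y| ^ p) ∂μ :=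
        lintegral_mono_set hsub
    _ ≤ ∑' k : ℕ, ∫⁻ y in A k, ENNReal.ofReal (dist x y ^ (-α) * |f y| ^ p) ∂μ :=
        lintegral_iUnion_le _ _
    _ ≤ ∑' k : ℕ, ENNReal.ofReal (N ^ p * 2 ^ lam * ρ ^ (lam - α) * r ^ k) :=
        ENNReal.tsum_le_tsum hterm
    _ ≤ ENNReal.ofReal ((2 ^ lam * (1 - r)⁻¹) * N ^ p * ρ ^ (lam - α)) := hsum
end
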